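/- arXiv:1701.02075 — 8 statements merged into one kernel-verified Lean document; each statement's English description precedes it below -/
import Mathlib

section
/- Let p be an odd prime, r = p^m, and a ∈ F_r^*. Set ρ ∈ F_p^* and define Ω₂ = Σ_{x∈F_r} Σ_{y∈F_p^*} ζ_p^{y(Tr(x)-1)} Σ_{δ∈F_p^*} ζ_p^{δ(Tr(ax)-ρ)}. Then Ω₂ = (p-1)r if a ∈ F_p^* and ρ = a; Ω₂ = -r if a ∈ F_p^* and ρ ≠ a; and Ω₂ = 0 if a ∉ F_p^*. -/
/-!
Write `ψ(t) = ζ^t` for the standard additive character of `𝔽_p`; then `ψ ∘ Tr` is a primitive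
character of `𝔽_r`. For fixed `y, δ ∈ 𝔽_p^*` the sum over `x` collapses, by orthogonality of
`ψ ∘ Tr`, to `r ψ(-(y + δρ))` if `y + δa = 0` and to `0` otherwise. Since `y, δ ≠ 0`, the
equation `y + δa = 0` has a solution only when `a = b ∈ 𝔽_p^*`, and then `y = -δb` for every `δ`;
what remains is `r ∑_{δ ≠ 0} ψ(δ(b - ρ))`, which is `(p - 1)r` or `-r` according as `b = ρ`
or not.
-/

open Finset

namespace AddChar

theorem IsPrimitive.compAddMonoidHom_trace {K L R' : Type*} [Field K] [Field L] [Finite L]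
    [Algebra K L] [CommRing R'] [IsDomain R'] {ψ : AddChar K R'} (hψ : ψ.IsPrimitive) :
    (ψ.compAddMonoidHom (Algebra.trace K L).toAddMonoidHom).IsPrimitive := by
  have : Finite K := Finite.of_injective _ (algebraMap K L).injective
  have : FiniteDimensional K L := Module.Finite.of_finite
  refine IsPrimitive.of_ne_one fun hΨ => ?_
  obtain ⟨t, ht⟩ := ne_one_iff.mp (by simpa using hψ one_ne_zero)
  obtain ⟨x, rfl⟩ := Algebra.trace_surjective K L t
  exact ht (DFunLike.congr_fun hΨ x)

theorem sum_filter_ne_zero_mulShift {R R' : Type*} [CommRing R] [Fintype R] [DecidableEq R]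
    [CommRing R'] [IsDomain R'] {ψ : AddChar R R'} (hψ : ψ.IsPrimitive) (c : R) :
    ∑ δ ∈ univ.filter (· ≠ 0), ψ (δ * c) = (if c = 0 then (Fintype.card R : R') else 0) - 1 := by
  rw [filter_ne' univ 0, sum_erase_eq_sub (mem_univ 0), sum_mulShift c hψ, zero_mul,
    map_zero_eq_one, Nat.cast_ite, Nat.cast_zero]

theorem sum_mul_comp_trace_eq_ite {K L R' : Type*} [Field K] [Field L] [Fintype L]
    [DecidableEq L] [Algebra K L] [CommRing R'] [IsDomain R'] {ψ : AddChar K R'}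
    (hψ : ψ.IsPrimitive) (a : L) (y δ ρ : K) :
    ∑ x : L, ψ (y * (Algebra.trace K L x - 1)) * ψ (δ * (Algebra.trace K L (a * x) - ρ)) =
      ψ (-(y + δ * ρ)) *
        if algebraMap K L y + algebraMap K L δ * a = 0 then (Fintype.card L : R') else 0 := by
  have hTr (t : K) (z : L) :
      Algebra.trace K L (algebraMap K L t * z) = t * Algebra.trace K L z := by
    rw [← Algebra.smul_def, map_smul, smul_eq_mul]
  have hΨ := sum_mulShift (algebraMap K L y + algebraMap K L δ * a) hψ.compAddMonoidHom_trace
  rw [Nat.cast_ite, Nat.cast_zero] at hΨ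
  rw [← hΨ, mul_sum]
  refine sum_congr rfl fun x _ => ?_
  rw [← map_add_eq_mul, compAddMonoidHom_apply, ← map_add_eq_mul]
  congr 1
  rw [LinearMap.toAddMonoidHom_coe,
    show x * (algebraMap K L y + algebraMap K L δ * a) =
      algebraMap K L y * x + algebraMap K L δ * (a * x) by ring,
    map_add, hTr, hTr]
  ring

theorem sum_sum_mul_ite_add_mul_eq_zero {R R' : Type*} [Field R] [Fintype R] [DecidableEq R]
    [CommRing R'] [IsDomain R'] {ψ : AddChar R R'} (hψ : ψ.IsPrimitive) {b : R} (hb : b ≠ 0)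
    (ρ : R) (C : R') :
    ∑ y ∈ univ.filter (· ≠ 0), ∑ δ ∈ univ.filter (· ≠ 0),
        ψ (-(y + δ * ρ)) * (if y + δ * b = 0 then C else 0) =
      ((if b - ρ = 0 then (Fintype.card R : R') else 0) - 1) * C := by
  rw [sum_comm, ← sum_filter_ne_zero_mulShift hψ, sum_mul]
  refine sum_congr rfl fun δ hδ => ?_
  have hδb : -(δ * b) ∈ univ.filter (· ≠ 0) := by
    simpa using mul_ne_zero (mem_filter.mp hδ).2 hb
  simp only [add_eq_zero_iff_eq_neg, mul_ite, mul_zero]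
  rw [sum_ite_eq' _ _ _, if_pos hδb]
  congr 2
  ring

end AddChar

theorem algebraMap_add_algebraMap_mul_ne_zero {K L : Type*} [Field K] [Field L] [Algebra K L]
    {a : L} (ha : a ∉ Set.range (algebraMap K L)) (y : K) {δ : K} (hδ : δ ≠ 0) :
    algebraMap K L y + algebraMap K L δ * a ≠ 0 := by
  intro h
  refine ha ⟨-(y / δ), ?_⟩
  rw [map_neg, map_div₀, neg_eq_iff_eq_neg, div_eq_iff ((map_ne_zero _).mpr hδ)]
  linear_combination h

theorem stmt4_general (p m : ℕ) [Fact p.Prime]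
    (F : Type) [Field F] [Fintype F] [DecidableEq F] [Algebra (ZMod p) F]
    (hcard : Fintype.card F = p ^ m)
    (ζ : ℂ) (hζ : IsPrimitiveRoot ζ p)
    (a : F) (ha : a ≠ 0) (ρ : ZMod p)
    (Ω₂ : ℂ)
    (hΩ : Ω₂ = ∑ x : F, ∑ y ∈ Finset.univ.filter (fun y : ZMod p => y ≠ 0),
        ∑ δ ∈ Finset.univ.filter (fun δ : ZMod p => δ ≠ 0),
          ζ ^ (y * (Algebra.trace (ZMod p) F x - 1)).val *
            ζ ^ (δ * (Algebra.trace (ZMod p) F (a * x) - ρ)).val) :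
    ((∃ b : ZMod p, algebraMap (ZMod p) F b = a) →
        (a = algebraMap (ZMod p) F ρ → Ω₂ = ((p : ℂ) - 1) * (p : ℂ) ^ m) ∧
        (a ≠ algebraMap (ZMod p) F ρ → Ω₂ = -(p : ℂ) ^ m)) ∧
    ((¬ ∃ b : ZMod p, algebraMap (ZMod p) F b = a) → Ω₂ = 0) := by
  have : NeZero p := ⟨(Fact.out : p.Prime).ne_zero⟩
  have hψ := AddChar.zmodChar_primitive_of_primitive_root p hζ
  set ψ := AddChar.zmodChar p hζ.pow_eq_one
  have hΩ_reduced : Ω₂ = ∑ y ∈ univ.filter (· ≠ 0), ∑ δ ∈ univ.filter (· ≠ 0), ψ (-(y + δ * ρ)) *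
      if algebraMap (ZMod p) F y + algebraMap (ZMod p) F δ * a = 0 then (p : ℂ) ^ m else 0 := by
    have hΩψ : Ω₂ = ∑ x : F, ∑ y ∈ univ.filter (· ≠ 0), ∑ δ ∈ univ.filter (· ≠ 0),
        ψ (y * (Algebra.trace (ZMod p) F x - 1)) *
          ψ (δ * (Algebra.trace (ZMod p) F (a * x) - ρ)) := hΩ
    rw [hΩψ, sum_comm]
    refine sum_congr rfl fun y _ => ?_
    rw [sum_comm]
    refine sum_congr rfl fun δ _ => ?_
    rw [AddChar.sum_mul_comp_trace_eq_ite hψ, hcard, Nat.cast_pow]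
  refine ⟨fun ⟨b, hb⟩ => ?_, fun ha' => ?_⟩
  · have hb0 : b ≠ 0 := by rintro rfl; exact ha (by rw [← hb, map_zero])
    simp_rw [← hb, ← map_mul, ← map_add, map_eq_zero] at hΩ_reduced
    rw [AddChar.sum_sum_mul_ite_add_mul_eq_zero hψ hb0, ZMod.card] at hΩ_reduced
    refine ⟨fun haρ => ?_, fun haρ => ?_⟩
    · rw [hΩ_reduced, if_pos (sub_eq_zero.mpr ((algebraMap (ZMod p) F).injective (hb.trans haρ)))]
    · rw [hΩ_reduced, if_neg fun h => haρ (by rw [← hb, sub_eq_zero.mp h]), zero_sub, neg_one_mul]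
  · rw [hΩ_reduced]
    refine sum_eq_zero fun y _ => sum_eq_zero fun δ hδ => ?_
    rw [if_neg (algebraMap_add_algebraMap_mul_ne_zero ha' y (mem_filter.mp hδ).2), mul_zero]

/-- The value of `Ω₂ = ∑_{x∈F_r} ∑_{y∈F_p^*} ζ^{y(Tr x - 1)} ∑_{δ∈F_p^*} ζ^{δ(Tr(ax)-ρ)}`:
it equals `(p-1)r` if `a ∈ F_p^*` and `ρ = a`, `-r` if `a ∈ F_p^*` and `ρ ≠ a`,
and `0` if `a ∉ F_p^*`. -/
theorem stmt4 (p m : ℕ) [Fact p.Prime] (hodd : p ≠ 2) (hm : 0 < m)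
    (F : Type) [Field F] [Fintype F] [DecidableEq F] [Algebra (ZMod p) F]
    (hcard : Fintype.card F = p ^ m)
    (ζ : ℂ) (hζ : IsPrimitiveRoot ζ p)
    (a : F) (ha : a ≠ 0) (ρ : ZMod p) (hρ : ρ ≠ 0)
    (Ω₂ : ℂ)
    (hΩ : Ω₂ = ∑ x : F, ∑ y ∈ Finset.univ.filter (fun y : ZMod p => y ≠ 0),
        ∑ δ ∈ Finset.univ.filter (fun δ : ZMod p => δ ≠ 0),
          ζ ^ (y * (Algebra.trace (ZMod p) F x - 1)).val *
            ζ ^ (δ * (Algebra.trace (ZMod p) F (a * x) - ρ)).val) :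
    ((∃ b : ZMod p, algebraMap (ZMod p) F b = a) →
        (a = algebraMap (ZMod p) F ρ → Ω₂ = ((p : ℂ) - 1) * (p : ℂ) ^ m) ∧
        (a ≠ algebraMap (ZMod p) F ρ → Ω₂ = -(p : ℂ) ^ m)) ∧
    ((¬ ∃ b : ZMod p, algebraMap (ZMod p) F b = a) → Ω₂ = 0) :=
  stmt4_general p m F hcard ζ hζ a ha ρ Ω₂ hΩ
end

section
/- Let p be an odd prime, r = p^m with m even, and a ∈ F_r^* with Tr(a²) = 0. Let ρ ∈ F_p^* and define Ω₃ = Σ_{x∈F_r} Σ_{z∈F_p^*} ζ_p^{z·Tr(x²)} Σ_{δ∈F_p^*} ζ_p^{δ(Tr(ax)-ρ)}. Then Ω₃ = -(p-1)·G_m, where G_m = Σ_{x∈F_r^*} η_m(x) ζ_p^{Tr(x)} is the quadratic Gauss sum of F_r. -/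
/-!
With `ψ(u) = ζ^u`, the map `x ↦ ψ(Tr x)` is a nontrivial additive character of `F_r`. For fixed
`z, δ ∈ F_p^*`, completing the square in `∑ₓ ψ(Tr(z x² + δ a x))` pulls out the factor
`ψ(Tr(-δ² a² / 4z)) = ψ(-δ²/4z · Tr(a²)) = 1`. Since `m` is even, `z` is a square in `F_r`, so
what remains is `∑ₓ ψ(Tr(x²))`, which equals `G_m` because `x² = y` has `1 + η_m(y)` solutions.
The leftover factor `ψ(-δρ)` sums to `-1` over `δ ≠ 0`, and the sum over `z ≠ 0` gives `p - 1`.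
-/

open Finset

section CharacterSums

variable {F R : Type*} [Field F] [Fintype F] [CommRing R]

theorem AddChar.sum_mul_sq_add_mul (ψ : AddChar F R) (h2 : (2 : F) ≠ 0) {u : F} (hu : u ≠ 0)
    (v : F) : ∑ x, ψ (u * x ^ 2 + v * x) = ψ (-v ^ 2 / (4 * u)) * ∑ x, ψ (u * x ^ 2) := by
  have hsq : ∀ x, u * (x - v / (2 * u)) ^ 2 + v * (x - v / (2 * u))
      = -v ^ 2 / (4 * u) + u * x ^ 2 := fun x => by
    have h4 : (4 : F) ≠ 0 := by
      simpa [show (4 : F) = 2 * 2 by norm_num] using mul_ne_zero h2 h2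
    field_simp
    ring
  rw [mul_sum, ← (Equiv.subRight (v / (2 * u))).sum_comp]
  simp only [Equiv.subRight_apply, hsq, AddChar.map_add_eq_mul]

theorem AddChar.sum_mul_sq_of_isSquare (ψ : AddChar F R) {u : F} (hu : IsSquare u)
    (hu0 : u ≠ 0) : ∑ x, ψ (u * x ^ 2) = ∑ x, ψ (x ^ 2) := by
  obtain ⟨w, rfl⟩ := hu
  refine Fintype.sum_equiv (Equiv.mulLeft₀ w (left_ne_zero_of_mul hu0)) _ _ fun x => ?_
  simp only [Equiv.mulLeft₀_apply, mul_pow]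
  ring_nf

theorem AddChar.sum_sq_eq_sum_quadraticChar_mul [DecidableEq F] [IsDomain R] (ψ : AddChar F R)
    (hψ : ψ ≠ 1) (hF : ringChar F ≠ 2) :
    ∑ x, ψ (x ^ 2) = ∑ y, (quadraticChar F y : R) * ψ y := by
  have hcard : ∀ y : F, (#{x : F | x ^ 2 = y} : R) = quadraticChar F y + 1 := fun y => by
    have := quadraticChar_card_sqrts hF y
    rw [Set.toFinset_ofPred] at this
    simpa using congrArg (Int.cast : ℤ → R) this
  calc ∑ x, ψ (x ^ 2) = ∑ y, ∑ x with x ^ 2 = y, ψ y := (sum_fiberwise' univ _ _).symm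
    _ = ∑ y, ((quadraticChar F y : R) + 1) * ψ y := by
        simp only [sum_const, nsmul_eq_mul, hcard]
    _ = _ := by
        simp only [add_mul, one_mul, sum_add_distrib, AddChar.sum_eq_zero_of_ne_one hψ, add_zero]

theorem AddChar.sum_ne_zero_mul_eq_neg_one [DecidableEq F] [IsDomain R] (ψ : AddChar F R)
    (hψ : ψ ≠ 1) {b : F} (hb : b ≠ 0) : ∑ δ ∈ univ.filter (· ≠ 0), ψ (δ * b) = -1 := by
  rw [filter_ne', sum_erase_eq_sub (mem_univ 0), sum_mulShift b (AddChar.IsPrimitive.of_ne_one hψ),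
    if_neg hb, zero_mul, AddChar.map_zero_eq_one, Nat.cast_zero, zero_sub]

end CharacterSums

section TraceCharacter

variable {K F R : Type*} [Field K] [Field F] [Fintype F] [Algebra K F] [CommRing R]

local notation "Tr" => Algebra.trace K F

theorem AddChar.compAddMonoidHom_trace_ne_one [Finite K] (ψ : AddChar K R) (hψ : ψ ≠ 1) :
    ψ.compAddMonoidHom (Tr).toAddMonoidHom ≠ 1 := fun h =>
  hψ <| AddChar.compAddMonoidHom_injective_left (Tr).toAddMonoidHom
    (Algebra.trace_surjective K F) (h.trans rfl)

theorem AddChar.sum_mul_trace_sq_add_mul_trace (ψ : AddChar K R) (hF : ringChar F ≠ 2)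
    (hsq : ∀ c : K, IsSquare (algebraMap K F c)) {a : F} (ha : Tr (a ^ 2) = 0) {z : K}
    (hz : z ≠ 0) (δ : K) :
    ∑ x : F, ψ (z * Tr (x ^ 2) + δ * Tr (a * x)) = ∑ x : F, ψ (Tr (x ^ 2)) := by
  set Ψ := ψ.compAddMonoidHom (Tr).toAddMonoidHom
  have hΨ : ∀ y, Ψ y = ψ (Tr y) := fun _ => rfl
  have hlin : ∀ (c : K) (y : F), c * Tr y = Tr (algebraMap K F c * y) := fun c y => by
    rw [← Algebra.smul_def, map_smul, smul_eq_mul]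
  have hu : algebraMap K F z ≠ 0 := (map_ne_zero _).mpr hz
  have hvertex : Tr (-(algebraMap K F δ * a) ^ 2 / (4 * algebraMap K F z)) = 0 := by
    rw [show -(algebraMap K F δ * a) ^ 2 / (4 * algebraMap K F z)
        = algebraMap K F (-δ ^ 2 / (4 * z)) * a ^ 2 by
      rw [map_div₀, map_neg, map_mul, map_pow, map_ofNat]; ring, ← hlin, ha, mul_zero]
  calc ∑ x, ψ (z * Tr (x ^ 2) + δ * Tr (a * x))
      = ∑ x, Ψ (algebraMap K F z * x ^ 2 + (algebraMap K F δ * a) * x) := by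
        simp only [hΨ, map_add, hlin, mul_assoc]
    _ = ∑ x, Ψ (algebraMap K F z * x ^ 2) := by
        rw [Ψ.sum_mul_sq_add_mul (Ring.two_ne_zero hF) hu, hΨ, hvertex, AddChar.map_zero_eq_one,
          one_mul]
    _ = _ := Ψ.sum_mul_sq_of_isSquare (hsq z) hu

theorem AddChar.sum_trace_sq_mul_trace_sub_eq [Fintype K] [DecidableEq K] [IsDomain R]
    (ψ : AddChar K R) (hψ : ψ ≠ 1) (hF : ringChar F ≠ 2)
    (hsq : ∀ c : K, IsSquare (algebraMap K F c)) {a : F} (ha : Tr (a ^ 2) = 0) {ρ : K}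
    (hρ : ρ ≠ 0) :
    ∑ x : F, ∑ z ∈ univ.filter (· ≠ 0), ∑ δ ∈ univ.filter (· ≠ 0),
        ψ (z * Tr (x ^ 2)) * ψ (δ * (Tr (a * x) - ρ))
      = -((Fintype.card K : R) - 1) * ∑ x : F, ψ (Tr (x ^ 2)) := by
  have hinner : ∀ z ∈ univ.filter (· ≠ 0), ∑ x : F, ∑ δ ∈ univ.filter (· ≠ 0),
      ψ (z * Tr (x ^ 2)) * ψ (δ * (Tr (a * x) - ρ)) = -∑ x : F, ψ (Tr (x ^ 2)) := by
    intro z hz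
    rw [sum_comm]
    calc _ = ∑ δ ∈ univ.filter (· ≠ 0),
            ψ (δ * -ρ) * ∑ x, ψ (z * Tr (x ^ 2) + δ * Tr (a * x)) := by
          refine sum_congr rfl fun δ _ => ?_
          rw [mul_sum]
          refine sum_congr rfl fun x _ => ?_
          rw [← AddChar.map_add_eq_mul, ← AddChar.map_add_eq_mul]
          ring_nf
      _ = ∑ δ ∈ univ.filter (· ≠ 0), ψ (δ * -ρ) * ∑ x : F, ψ (Tr (x ^ 2)) := by
          simp only [ψ.sum_mul_trace_sq_add_mul_trace hF hsq ha (mem_filter.mp hz).2]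
      _ = _ := by rw [← sum_mul, ψ.sum_ne_zero_mul_eq_neg_one hψ (neg_ne_zero.mpr hρ), neg_one_mul]
  rw [sum_comm, sum_congr rfl hinner, sum_const, filter_ne', card_erase_of_mem (mem_univ _),
    card_univ, nsmul_eq_mul, Nat.cast_sub Fintype.card_pos, Nat.cast_one]
  ring

end TraceCharacter

theorem Nat.sub_one_dvd_pow_div_two {p m : ℕ} (hp : Odd p) (hm : Even m) : p - 1 ∣ p ^ m / 2 := by
  obtain ⟨k, rfl⟩ := hm.two_dvd
  rw [← Nat.mul_dvd_mul_iff_left two_pos, Nat.two_mul_odd_div_two (Nat.odd_iff.mp hp.pow)]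
  calc 2 * (p - 1) ∣ (p + 1) * (p - 1) := mul_dvd_mul_right hp.add_one.two_dvd _
    _ = p ^ 2 - 1 := by rw [← Nat.sq_sub_sq, one_pow]
    _ ∣ (p ^ 2) ^ k - 1 := by simpa using Nat.sub_dvd_pow_sub_pow (p ^ 2) 1 k
    _ = p ^ (2 * k) - 1 := by rw [pow_mul]

section PrimeField

variable {p : ℕ} [Fact p.Prime] {F : Type*} [Field F] [Algebra (ZMod p) F]

theorem ringChar_eq_of_algebra_zmod : ringChar F = p :=
  have : CharP F p := charP_of_injective_algebraMap' (ZMod p) p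
  ringChar.eq F p

theorem ZMod.isSquare_algebraMap_of_even [Fintype F] {m : ℕ} (hp : p ≠ 2) (hm : Even m)
    (hcard : Fintype.card F = p ^ m) (z : ZMod p) : IsSquare (algebraMap (ZMod p) F z) := by
  rcases eq_or_ne z 0 with rfl | hz
  · simp
  have hF : ringChar F ≠ 2 := by rwa [ringChar_eq_of_algebra_zmod (p := p)]
  obtain ⟨t, ht⟩ := Nat.sub_one_dvd_pow_div_two ((Fact.out : p.Prime).odd_of_ne_two hp) hm
  rw [FiniteField.isSquare_iff hF ((map_ne_zero _).2 hz), hcard, ht, pow_mul, ← map_pow,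
    ZMod.pow_card_sub_one_eq_one hz, map_one, one_pow]

end PrimeField

theorem stmt5_general (p m : ℕ) [Fact p.Prime] (hodd : p ≠ 2) (hme : Even m)
    (F : Type) [Field F] [Fintype F] [DecidableEq F] [Algebra (ZMod p) F]
    (hcard : Fintype.card F = p ^ m)
    (ζ : ℂ) (hζ : IsPrimitiveRoot ζ p)
    (ηm : F → ℂ)
    (hηm : ∀ a : F, ηm a = if a = 0 then 0 else if IsSquare a then 1 else -1)
    (Gm : ℂ)
    (hGm : Gm = ∑ x ∈ Finset.univ.filter (fun x : F => x ≠ 0),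
        ηm x * ζ ^ (Algebra.trace (ZMod p) F x).val)
    (a : F) (hA : Algebra.trace (ZMod p) F (a ^ 2) = 0)
    (ρ : ZMod p) (hρ : ρ ≠ 0)
    (Ω₃ : ℂ)
    (hΩ : Ω₃ = ∑ x : F, ∑ z ∈ Finset.univ.filter (fun z : ZMod p => z ≠ 0),
        ∑ δ ∈ Finset.univ.filter (fun δ : ZMod p => δ ≠ 0),
          ζ ^ (z * Algebra.trace (ZMod p) F (x ^ 2)).val *
            ζ ^ (δ * (Algebra.trace (ZMod p) F (a * x) - ρ)).val) :
    Ω₃ = -((p : ℂ) - 1) * Gm := by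
  have : NeZero p := ⟨(Fact.out : p.Prime).ne_zero⟩
  set ψ := AddChar.zmodChar p hζ.pow_eq_one
  have hψ : ψ ≠ 1 := by
    simpa using AddChar.zmodChar_primitive_of_primitive_root p hζ one_ne_zero
  have hF : ringChar F ≠ 2 := by rwa [ringChar_eq_of_algebra_zmod (p := p)]
  have hη : ∀ y, ηm y = quadraticChar F y := fun y => by
    rw [hηm, quadraticChar_apply, quadraticCharFun]
    split_ifs <;> simp
  have hG : Gm = ∑ x : F, ψ (Algebra.trace (ZMod p) F (x ^ 2)) := by
    rw [hGm, sum_filter_of_ne (p := (· ≠ 0)) fun x _ hx h0 => hx (by simp [h0, hη])]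
    simp only [hη]
    exact ((ψ.compAddMonoidHom _).sum_sq_eq_sum_quadraticChar_mul
      (ψ.compAddMonoidHom_trace_ne_one hψ) hF).symm
  rw [hΩ, hG, show (p : ℂ) = Fintype.card (ZMod p) by rw [ZMod.card]]
  exact ψ.sum_trace_sq_mul_trace_sub_eq hψ hF (ZMod.isSquare_algebraMap_of_even hodd hme hcard)
    hA hρ

/-- For `m` even and `Tr(a²) = 0` (`a ≠ 0`), the sum
`Ω₃ = ∑_{x∈F_r} ∑_{z∈F_p^*} ζ^{z Tr(x²)} ∑_{δ∈F_p^*} ζ^{δ(Tr(ax)-ρ)}` equals `-(p-1)G_m`. -/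
theorem stmt5 (p m : ℕ) [Fact p.Prime] (hodd : p ≠ 2) (hm : 0 < m) (hme : Even m)
    (F : Type) [Field F] [Fintype F] [DecidableEq F] [Algebra (ZMod p) F]
    (hcard : Fintype.card F = p ^ m)
    (ζ : ℂ) (hζ : IsPrimitiveRoot ζ p)
    (ηm : F → ℂ)
    (hηm : ∀ a : F, ηm a = if a = 0 then 0 else if IsSquare a then 1 else -1)
    (Gm : ℂ)
    (hGm : Gm = ∑ x ∈ Finset.univ.filter (fun x : F => x ≠ 0),
        ηm x * ζ ^ (Algebra.trace (ZMod p) F x).val)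
    (a : F) (ha : a ≠ 0) (hA : Algebra.trace (ZMod p) F (a ^ 2) = 0)
    (ρ : ZMod p) (hρ : ρ ≠ 0)
    (Ω₃ : ℂ)
    (hΩ : Ω₃ = ∑ x : F, ∑ z ∈ Finset.univ.filter (fun z : ZMod p => z ≠ 0),
        ∑ δ ∈ Finset.univ.filter (fun δ : ZMod p => δ ≠ 0),
          ζ ^ (z * Algebra.trace (ZMod p) F (x ^ 2)).val *
            ζ ^ (δ * (Algebra.trace (ZMod p) F (a * x) - ρ)).val) :
    Ω₃ = -((p : ℂ) - 1) * Gm :=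
  stmt5_general p m hodd hme F hcard ζ hζ ηm hηm Gm hGm a hA ρ hρ Ω₃ hΩ
end

section
/- Let p be an odd prime, r = p^m with m even, and a ∈ F_r^* with Tr(a²) ≠ 0. Let ρ ∈ F_p^* and Ω₃ = Σ_{x∈F_r} Σ_{z∈F_p^*} ζ_p^{z·Tr(x²)} Σ_{δ∈F_p^*} ζ_p^{δ(Tr(ax)-ρ)}. Then Ω₃ = G_m, where G_m is the quadratic Gauss sum over F_r. -/
/-!
Write `ψ(u) = ζ ^ u` for the canonical additive character of `𝔽ₚ`. For fixed `z, δ ≠ 0`,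
completing the square turns the sum over `x` into `ψ(-δρ) ψ(-δ² Tr(a²) / (4z)) ∑ₓ ψ(Tr(z x²))`.
Since `m` is even, every `z ∈ 𝔽ₚ` is a square in `F`, so the last sum is `∑ₓ ψ(Tr(x²)) = G_m`.
As `Tr(a²) ≠ 0`, the map `z ↦ -δ² Tr(a²) / (4z)` permutes `𝔽ₚ^*`, so summing over `z` gives
`-ψ(-δρ) G_m`, and summing `ψ(-δρ)` over `δ ≠ 0` contributes a second factor `-1`.
-/

open Finset

lemma four_ne_zero_of_two_ne_zero {R : Type*} [Semiring R] [NoZeroDivisors R]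
    (h2 : (2 : R) ≠ 0) : (4 : R) ≠ 0 := by
  rw [show (4 : R) = 2 * 2 by norm_num]
  exact mul_ne_zero h2 h2

namespace AddChar

section SumNonzero

variable {K R : Type*} [CommRing R] [IsDomain R]

lemma sum_filter_ne_zero_comp_eq_neg_one [AddGroup K] [Fintype K] [DecidableEq K]
    {ψ : AddChar K R} (hψ : ψ ≠ 1) {f : K → K} (hf : f.Bijective) (hf0 : f 0 = 0) :
    ∑ z ∈ univ.filter (· ≠ 0), ψ (f z) = -1 := by
  have hsum : ∑ z, ψ (f z) = 0 :=
    (Fintype.sum_bijective f hf _ ψ fun _ ↦ rfl).trans (sum_eq_zero_of_ne_one hψ)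
  rw [filter_ne', sum_erase_eq_sub (mem_univ 0), hsum, hf0, map_zero_eq_one, zero_sub]

variable [Field K] [Fintype K] [DecidableEq K] {ψ : AddChar K R}

lemma sum_filter_ne_zero_mul_eq_neg_one (hψ : ψ ≠ 1) {t : K} (ht : t ≠ 0) :
    ∑ z ∈ univ.filter (· ≠ 0), ψ (z * t) = -1 :=
  sum_filter_ne_zero_comp_eq_neg_one hψ (mulRight_bijective₀ t ht) (zero_mul t)

lemma sum_filter_ne_zero_div_eq_neg_one (hψ : ψ ≠ 1) {t : K} (ht : t ≠ 0) :
    ∑ z ∈ univ.filter (· ≠ 0), ψ (t / z) = -1 := by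
  simpa only [div_eq_mul_inv] using sum_filter_ne_zero_comp_eq_neg_one hψ (f := (t * ·⁻¹))
    ((mulLeft_bijective₀ t ht).comp inv_involutive.bijective) (by simp)

end SumNonzero

section Quadratic

variable {F R : Type*} [Field F] [Fintype F] [CommRing R]

lemma sum_mul_sq_add_mul_s6 (ψ : AddChar F R) (h2 : (2 : F) ≠ 0) {c : F} (hc : c ≠ 0) (b : F) :
    ∑ x, ψ (c * x ^ 2 + b * x) = ψ (-b ^ 2 / (4 * c)) * ∑ x, ψ (c * x ^ 2) := by
  have h4 := four_ne_zero_of_two_ne_zero h2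
  rw [mul_sum]
  refine Fintype.sum_equiv (Equiv.addRight (b / (2 * c))) _ _ fun x ↦ ?_
  rw [← map_add_eq_mul]
  congr 1
  simp only [Equiv.coe_addRight]
  field_simp
  ring

lemma sum_sq_eq_gaussSum [DecidableEq F] [IsDomain R] (hF : ringChar F ≠ 2) {ψ : AddChar F R}
    (hψ : ψ ≠ 1) :
    ∑ x, ψ (x ^ 2) = gaussSum ((quadraticChar F).ringHomComp (Int.castRingHom R)) ψ := by
  have hfiber (t : F) : ∑ x ∈ univ.filter (fun x ↦ x ^ 2 = t), ψ (x ^ 2) =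
      ((quadraticChar F t : ℤ) : R) * ψ t + ψ t := by
    rw [sum_congr rfl fun x hx ↦ by rw [(mem_filter.1 hx).2], sum_const, nsmul_eq_mul,
      ← add_one_mul]
    congr 1
    have := congrArg (Int.cast (R := R)) (quadraticChar_card_sqrts hF t)
    rw [Set.toFinset_ofPred] at this
    push_cast at this
    exact this
  rw [← sum_fiberwise univ (· ^ 2), sum_congr rfl fun t _ ↦ hfiber t, sum_add_distrib,
    sum_eq_zero_of_ne_one hψ, add_zero]
  rfl

end Quadratic

end AddChar

lemma sum_comp_mul_sq_of_isSquare {F M : Type*} [Field F] [Fintype F] [AddCommMonoid M]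
    (f : F → M) {c : F} (hc : c ≠ 0) (hsq : IsSquare c) : ∑ x, f (c * x ^ 2) = ∑ x, f (x ^ 2) := by
  obtain ⟨s, rfl⟩ := hsq
  have hs : s ≠ 0 := by rintro rfl; simp at hc
  exact Fintype.sum_equiv (Equiv.mulLeft₀ s hs) _ _ fun x ↦ by
    simp only [Equiv.mulLeft₀_apply]; ring_nf

lemma gaussSum_quadraticChar_eq_sum_filter_ne_zero {F R : Type*} [Field F] [Fintype F]
    [DecidableEq F] [CommRing R] (ψ : AddChar F R) {η : F → R}
    (hη : ∀ x, η x = if x = 0 then 0 else if IsSquare x then 1 else -1) :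
    gaussSum ((quadraticChar F).ringHomComp (Int.castRingHom R)) ψ =
      ∑ x ∈ univ.filter (· ≠ 0), η x * ψ x := by
  rw [gaussSum, ← sum_filter_of_ne (p := (· ≠ 0)) fun x _ hx h0 ↦ hx (by simp [h0])]
  refine sum_congr rfl fun x _ ↦ ?_
  rw [hη]
  simp only [MulChar.ringHomComp_apply, quadraticChar_apply, quadraticCharFun]
  split_ifs <;> simp

/-- The exponent `(|L| - 1) / 2` of Euler's criterion in `L` is a multiple of `|K| - 1`,
because `|K|² - 1 ∣ |L| - 1` and `|K| + 1` is even. -/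
theorem FiniteField.isSquare_algebraMap_of_even {K L : Type*} [Field K] [Fintype K] [Field L]
    [Fintype L] [Algebra K L] (hK : ringChar K ≠ 2) {n : ℕ} (hn : Even n)
    (hcard : Fintype.card L = Fintype.card K ^ n) (c : K) : IsSquare (algebraMap K L c) := by
  rcases eq_or_ne c 0 with rfl | hc
  · simp
  set q := Fintype.card K
  have hdvd : (q - 1) * 2 ∣ q ^ n - 1 := by
    obtain ⟨k, rfl⟩ := hn
    obtain ⟨r, hr⟩ : Odd q := Nat.odd_iff.2 (FiniteField.odd_card_of_char_ne_two hK)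
    have hsq : (q - 1) * 2 ∣ q ^ 2 - 1 := ⟨r + 1, by
      rw [hr, Nat.add_sub_cancel,
        Nat.sub_eq_of_eq_add (by ring : (2 * r + 1) ^ 2 = 2 * r * 2 * (r + 1) + 1)]⟩
    rw [← two_mul, pow_mul]
    exact hsq.trans (by simpa using Nat.sub_dvd_pow_sub_pow (q ^ 2) 1 k)
  obtain ⟨j, hj⟩ := hdvd
  have hpos : 0 < q ^ n := pow_pos Fintype.card_pos n
  have hhalf : Fintype.card L / 2 = (q - 1) * j := by
    rw [hcard]; rw [mul_assoc, mul_left_comm] at hj; omega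
  rw [FiniteField.isSquare_iff (Algebra.ringChar_eq K L ▸ hK) (by simpa using hc), hhalf, pow_mul,
    ← map_pow, FiniteField.pow_card_sub_one_eq_one c hc, map_one, one_pow]

namespace AddChar

variable {K L R : Type*} [Field K] [Field L] [Algebra K L] [Fintype L] [CommRing R]
  (ψ : AddChar K R)

lemma sum_trace_mul_sq_add (h2 : (2 : L) ≠ 0) {z : K} (hz : z ≠ 0)
    (hsq : IsSquare (algebraMap K L z)) (b : L) :
    ∑ x : L, ψ (z * Algebra.trace K L (x ^ 2) + Algebra.trace K L (b * x)) =
      ψ (-Algebra.trace K L (b ^ 2) / (4 * z)) * ∑ x : L, ψ (Algebra.trace K L (x ^ 2)) := by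
  set T := Algebra.trace K L
  set Ψ := ψ.compAddMonoidHom T.toAddMonoidHom
  have hc : algebraMap K L z ≠ 0 := by simpa using hz
  have hlin (x : L) : z * T (x ^ 2) + T (b * x) = T (algebraMap K L z * x ^ 2 + b * x) := by
    rw [map_add, ← Algebra.smul_def, map_smul, smul_eq_mul]
  have hshift : T (-b ^ 2 / (4 * algebraMap K L z)) = -T (b ^ 2) / (4 * z) := by
    rw [div_eq_inv_mul, ← map_ofNat (algebraMap K L) 4, ← map_mul, ← map_inv₀, ← Algebra.smul_def,
      map_smul, map_neg, smul_eq_mul, div_eq_inv_mul]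
  simp only [hlin]
  change ∑ x, Ψ _ = ψ _ * ∑ x, Ψ (x ^ 2)
  rw [Ψ.sum_mul_sq_add_mul_s6 h2 hc, sum_comp_mul_sq_of_isSquare Ψ hc hsq]
  simp only [Ψ, compAddMonoidHom_apply, LinearMap.toAddMonoidHom_coe, hshift]

lemma sum_trace_mul_sq_mul_trace_sub (h2 : (2 : L) ≠ 0) {z : K} (hz : z ≠ 0)
    (hsq : IsSquare (algebraMap K L z)) (a : L) (δ ρ : K) :
    ∑ x : L, ψ (z * Algebra.trace K L (x ^ 2)) * ψ (δ * (Algebra.trace K L (a * x) - ρ)) =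
      ψ (δ * -ρ) * (ψ (-(δ ^ 2 * Algebra.trace K L (a ^ 2)) / (4 * z)) *
        ∑ x : L, ψ (Algebra.trace K L (x ^ 2))) := by
  set T := Algebra.trace K L
  set b := algebraMap K L δ * a
  have hterm (x : L) : ψ (z * T (x ^ 2)) * ψ (δ * (T (a * x) - ρ)) =
      ψ (δ * -ρ) * ψ (z * T (x ^ 2) + T (b * x)) := by
    rw [← map_add_eq_mul, ← map_add_eq_mul, mul_assoc, ← Algebra.smul_def, map_smul, smul_eq_mul]
    ring_nf
  have hb : T (b ^ 2) = δ ^ 2 * T (a ^ 2) := by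
    rw [mul_pow, ← map_pow, ← Algebra.smul_def, map_smul, smul_eq_mul]
  rw [sum_congr rfl fun x _ ↦ hterm x, ← mul_sum, ψ.sum_trace_mul_sq_add h2 hz hsq, hb]

end AddChar

theorem stmt6_general (p m : ℕ) [Fact p.Prime] (hodd : p ≠ 2) (hme : Even m)
    (F : Type) [Field F] [Fintype F] [DecidableEq F] [Algebra (ZMod p) F]
    (hcard : Fintype.card F = p ^ m)
    (ζ : ℂ) (hζ : IsPrimitiveRoot ζ p)
    (ηm : F → ℂ)
    (hηm : ∀ a : F, ηm a = if a = 0 then 0 else if IsSquare a then 1 else -1)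
    (Gm : ℂ)
    (hGm : Gm = ∑ x ∈ Finset.univ.filter (fun x : F => x ≠ 0),
        ηm x * ζ ^ (Algebra.trace (ZMod p) F x).val)
    (a : F) (hA : Algebra.trace (ZMod p) F (a ^ 2) ≠ 0)
    (ρ : ZMod p) (hρ : ρ ≠ 0)
    (Ω₃ : ℂ)
    (hΩ : Ω₃ = ∑ x : F, ∑ z ∈ Finset.univ.filter (fun z : ZMod p => z ≠ 0),
        ∑ δ ∈ Finset.univ.filter (fun δ : ZMod p => δ ≠ 0),
          ζ ^ (z * Algebra.trace (ZMod p) F (x ^ 2)).val *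
            ζ ^ (δ * (Algebra.trace (ZMod p) F (a * x) - ρ)).val) :
    Ω₃ = Gm := by
  have hK : ringChar (ZMod p) ≠ 2 := by rwa [ZMod.ringChar_zmod_n]
  have hF : ringChar F ≠ 2 := Algebra.ringChar_eq (ZMod p) F ▸ hK
  set T := Algebra.trace (ZMod p) F
  set ψ := AddChar.zmodChar p hζ.pow_eq_one
  have hψ : ψ.IsPrimitive := AddChar.zmodChar_primitive_of_primitive_root p hζ
  have hψ_ne : ψ ≠ 1 := by simpa using hψ one_ne_zero
  have hΨ : ψ.compAddMonoidHom T.toAddMonoidHom ≠ 1 :=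
    AddChar.ne_one_iff.2 ⟨a ^ 2, by simpa [hψ.zmod_char_eq_one_iff] using hA⟩
  have hG : ∑ x, ψ (T (x ^ 2)) = Gm := by
    refine ((ψ.compAddMonoidHom T.toAddMonoidHom).sum_sq_eq_gaussSum hF hΨ).trans ?_
    rw [gaussSum_quadraticChar_eq_sum_filter_ne_zero _ hηm, hGm]
    rfl
  set S := univ.filter (fun z : ZMod p => z ≠ 0)
  have hsum_x (δ : ZMod p) (z : ZMod p) (hz : z ∈ S) :
      ∑ x, ζ ^ (z * T (x ^ 2)).val * ζ ^ (δ * (T (a * x) - ρ)).val =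
        ψ (δ * -ρ) * (ψ (-(δ ^ 2 * T (a ^ 2)) / 4 / z) * Gm) := by
    rw [div_div, ← hG]
    exact ψ.sum_trace_mul_sq_mul_trace_sub (Ring.two_ne_zero hF) (mem_filter.1 hz).2
      (FiniteField.isSquare_algebraMap_of_even hK hme (by rw [hcard, ZMod.card]) z) a δ ρ
  calc Ω₃ = ∑ δ ∈ S, ∑ z ∈ S, ∑ x, ζ ^ (z * T (x ^ 2)).val * ζ ^ (δ * (T (a * x) - ρ)).val := by
        rw [hΩ, sum_comm, sum_congr rfl fun z _ ↦ sum_comm, sum_comm]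
    _ = ∑ δ ∈ S, ψ (δ * -ρ) * ((∑ z ∈ S, ψ (-(δ ^ 2 * T (a ^ 2)) / 4 / z)) * Gm) := by
        simp only [sum_congr rfl fun δ _ ↦ sum_congr rfl (hsum_x δ), mul_sum, sum_mul]
    _ = ∑ δ ∈ S, ψ (δ * -ρ) * -Gm := sum_congr rfl fun δ hδ ↦ by
        have ht : -(δ ^ 2 * T (a ^ 2)) / 4 ≠ 0 := div_ne_zero
          (neg_ne_zero.2 (mul_ne_zero (pow_ne_zero 2 (mem_filter.1 hδ).2) hA))
          (four_ne_zero_of_two_ne_zero (Ring.two_ne_zero hK))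
        rw [AddChar.sum_filter_ne_zero_div_eq_neg_one hψ_ne ht, neg_one_mul]
    _ = Gm := by
        rw [← sum_mul, AddChar.sum_filter_ne_zero_mul_eq_neg_one hψ_ne (neg_ne_zero.2 hρ)]
        ring

/-- For `m` even and `Tr(a²) ≠ 0` (`a ≠ 0`), the sum
`Ω₃ = ∑_{x∈F_r} ∑_{z∈F_p^*} ζ^{z Tr(x²)} ∑_{δ∈F_p^*} ζ^{δ(Tr(ax)-ρ)}` equals `G_m`. -/
theorem stmt6 (p m : ℕ) [Fact p.Prime] (hodd : p ≠ 2) (hm : 0 < m) (hme : Even m)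
    (F : Type) [Field F] [Fintype F] [DecidableEq F] [Algebra (ZMod p) F]
    (hcard : Fintype.card F = p ^ m)
    (ζ : ℂ) (hζ : IsPrimitiveRoot ζ p)
    (ηm : F → ℂ)
    (hηm : ∀ a : F, ηm a = if a = 0 then 0 else if IsSquare a then 1 else -1)
    (Gm : ℂ)
    (hGm : Gm = ∑ x ∈ Finset.univ.filter (fun x : F => x ≠ 0),
        ηm x * ζ ^ (Algebra.trace (ZMod p) F x).val)
    (a : F) (ha : a ≠ 0) (hA : Algebra.trace (ZMod p) F (a ^ 2) ≠ 0)
    (ρ : ZMod p) (hρ : ρ ≠ 0)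
    (Ω₃ : ℂ)
    (hΩ : Ω₃ = ∑ x : F, ∑ z ∈ Finset.univ.filter (fun z : ZMod p => z ≠ 0),
        ∑ δ ∈ Finset.univ.filter (fun δ : ZMod p => δ ≠ 0),
          ζ ^ (z * Algebra.trace (ZMod p) F (x ^ 2)).val *
            ζ ^ (δ * (Algebra.trace (ZMod p) F (a * x) - ρ)).val) :
    Ω₃ = Gm :=
  stmt6_general p m hodd hme F hcard ζ hζ ηm hηm Gm hGm a hA ρ hρ Ω₃ hΩ
end

section
/- Let p be an odd prime, r = p^m with m odd, and a ∈ F_r^* with A := Tr(a²). Let ρ ∈ F_p^* and Ω₃ = Σ_{x∈F_r} Σ_{z∈F_p^*} ζ_p^{z·Tr(x²)} Σ_{δ∈F_p^*} ζ_p^{δ(Tr(ax)-ρ)}. Then Ω₃ = 0 if A = 0, and Ω₃ = -η(-A)·G_m·G if A ≠ 0, where η is the quadratic character of F_p, G its Gauss sum over F_p, and G_m the quadratic Gauss sum over F_r. -/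
/-!
Write `ψ = ζ^(·)` for the canonical additive character of `F_p` and `ψ ∘ Tr` for its lift to `F_r`.
For fixed `z, δ ≠ 0` the `x`-sum is a quadratic character sum over `F_r`; completing the square
evaluates it as `η_m(z) G_m ψ(-δ² A / 4z)`, and `η_m(z) = η(z)` because `m` is odd. The `z`-sum
`Σ η(z) ψ(c / z)` is `η(c) G` after `z ↦ c / z` (this also covers `c = 0`, i.e. `A = 0`, since
`Σ η = 0`), and `η(-δ² A / 4) = η(-A)`. Finally `Σ_{δ ≠ 0} ψ(-δρ) = -1`.
-/

open Finset AddChar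

noncomputable abbrev quadraticCharℂ (K : Type*) [Field K] [Fintype K] [DecidableEq K] :
    MulChar K ℂ :=
  (quadraticChar K).ringHomComp (Int.castRingHom ℂ)

section FiniteField

variable {K : Type*} [Field K] [Fintype K]

lemma sum_mulChar_mul_addChar_div {χ : MulChar K ℂ} (hχ : χ.IsQuadratic) (hχ₁ : χ ≠ 1)
    (ψ : AddChar K ℂ) (c : K) :
    ∑ z, χ z * ψ (c / z) = χ c * gaussSum χ ψ := by
  rcases eq_or_ne c 0 with rfl | hc
  · simp [MulChar.sum_eq_zero_of_ne_one hχ₁, MulChar.map_zero]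
  have hinv : Function.Involutive (c / · : K → K) := fun z => div_div_cancel₀ hc
  rw [← Fintype.sum_equiv (hinv.toPerm _) _ _ fun z => rfl]
  simp only [Function.Involutive.coe_toPerm, div_div_cancel₀ hc, gaussSum, mul_sum]
  refine sum_congr rfl fun z _ => ?_
  rw [div_eq_mul_inv, map_mul, ← MulChar.inv_apply', hχ.inv, mul_assoc]

variable [DecidableEq K]

lemma quadraticCharℂ_apply (a : K) : quadraticCharℂ K a = quadraticChar K a := rfl

lemma quadraticCharℂ_eq_ite (a : K) :
    quadraticCharℂ K a = if a = 0 then 0 else if IsSquare a then 1 else -1 := by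
  rw [quadraticCharℂ_apply, quadraticChar_apply, quadraticCharFun]
  split_ifs <;> norm_num

lemma quadraticCharℂ_isQuadratic : (quadraticCharℂ K).IsQuadratic :=
  (quadraticChar_isQuadratic K).comp _

lemma quadraticCharℂ_ne_one (hK : ringChar K ≠ 2) : quadraticCharℂ K ≠ 1 :=
  (MulChar.ringHomComp_ne_one_iff Int.cast_injective).mpr (quadraticChar_ne_one hK)

lemma sum_comp_sq (hK : ringChar K ≠ 2) (f : K → ℂ) :
    ∑ x, f (x ^ 2) = ∑ y, (quadraticCharℂ K y + 1) * f y := by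
  rw [← sum_fiberwise univ (· ^ 2) (fun x => f (x ^ 2))]
  refine sum_congr rfl fun y _ => ?_
  have hcard := quadraticChar_card_sqrts hK y
  rw [Set.toFinset_ofPred] at hcard
  rw [sum_congr rfl fun x hx => by rw [(mem_filter.mp hx).2], sum_const, nsmul_eq_mul,
    quadraticCharℂ_apply]
  exact_mod_cast congrArg (fun n : ℤ => (n : ℂ) * f y) hcard

variable {ψ : AddChar K ℂ}

lemma sum_addChar_mul_sq (hK : ringChar K ≠ 2) (hψ : ψ.IsPrimitive) {b : K} (hb : b ≠ 0) :
    ∑ x, ψ (b * x ^ 2) = quadraticCharℂ K b * gaussSum (quadraticCharℂ K) ψ := by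
  have hlinear : ∑ y, ψ (b * y) = 0 := by
    simpa [mul_comm, hb] using sum_mulShift b hψ
  rw [sum_comp_sq hK (fun y => ψ (b * y))]
  simp only [add_mul, one_mul, sum_add_distrib, hlinear, add_zero]
  have hshift := gaussSum_mulShift_eq (quadraticCharℂ K) ψ (Units.mk0 b hb)
  rwa [quadraticCharℂ_isQuadratic.inv] at hshift

lemma sum_addChar_quadratic (hK : ringChar K ≠ 2) (hψ : ψ.IsPrimitive) {b : K} (hb : b ≠ 0)
    (c : K) :
    ∑ x, ψ (b * x ^ 2 + c * x) =
      quadraticCharℂ K b * gaussSum (quadraticCharℂ K) ψ * ψ (-(c ^ 2 / (4 * b))) := by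
  have h2 : (2 : K) ≠ 0 := Ring.two_ne_zero hK
  have h4 : (4 : K) ≠ 0 := by simpa [show (4 : K) = 2 ^ 2 by norm_num] using h2
  have hsquare : ∀ x, b * (x - c / (2 * b)) ^ 2 + c * (x - c / (2 * b))
      = b * x ^ 2 + -(c ^ 2 / (4 * b)) := fun x => by field_simp; ring
  rw [← Fintype.sum_equiv (Equiv.subRight (c / (2 * b))) _ _ fun x => rfl]
  simp only [Equiv.subRight_apply, hsquare, map_add_eq_mul, ← sum_mul,
    sum_addChar_mul_sq hK hψ hb]

lemma sum_quadraticCharℂ_mul_addChar_sq_div (hK : ringChar K ≠ 2) (ψ : AddChar K ℂ) {δ : K}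
    (hδ : δ ≠ 0) (A : K) :
    ∑ z ∈ univ.filter (fun z : K => z ≠ 0), quadraticCharℂ K z * ψ (-(δ ^ 2 * A / (4 * z))) =
      quadraticCharℂ K (-A) * gaussSum (quadraticCharℂ K) ψ := by
  have h2 : (2 : K) ≠ 0 := Ring.two_ne_zero hK
  have hsq : ∀ z : K, -(δ ^ 2 * A / (4 * z)) = -A * (δ / 2) ^ 2 / z := fun z => by
    rw [div_pow, show (2 : K) ^ 2 = 4 by norm_num]
    ring
  rw [filter_ne', sum_erase _ (by simp), Fintype.sum_congr _ _ fun z => by rw [hsq],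
    sum_mulChar_mul_addChar_div quadraticCharℂ_isQuadratic (quadraticCharℂ_ne_one hK), map_mul,
    quadraticCharℂ_apply ((δ / 2) ^ 2), quadraticChar_sq_one' (div_ne_zero hδ h2)]
  simp

lemma sum_ne_zero_addChar_mul (hψ : ψ.IsPrimitive) {b : K} (hb : b ≠ 0) :
    ∑ δ ∈ univ.filter (fun δ : K => δ ≠ 0), ψ (δ * b) = -1 := by
  rw [filter_ne', sum_erase_eq_sub (mem_univ 0), sum_mulShift b hψ]
  simp [hb]

end FiniteField

noncomputable abbrev AddChar.compTrace {k : Type*} (F : Type*) [Field k] [Field F] [Algebra k F]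
    (ψ : AddChar k ℂ) : AddChar F ℂ :=
  ψ.compAddMonoidHom (Algebra.trace k F).toAddMonoidHom

lemma AddChar.IsPrimitive.compTrace {k F : Type*} [Field k] [Field F] [Algebra k F] [Finite F]
    {ψ : AddChar k ℂ} (hψ : ψ.IsPrimitive) : (ψ.compTrace F).IsPrimitive := by
  have : Finite k := Finite.of_injective _ (algebraMap k F).injective
  have : FiniteDimensional k F := Module.Finite.of_finite
  intro b hb h
  refine hψ one_ne_zero ?_
  ext t
  obtain ⟨y, rfl⟩ := Algebra.trace_surjective k F t
  simpa [mul_inv_cancel_left₀ hb] using DFunLike.congr_fun h (b⁻¹ * y)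

lemma Nat.pow_div_two_eq_mul_geom_sum {p : ℕ} (hp : Odd p) (m : ℕ) :
    p ^ m / 2 = p / 2 * ∑ i ∈ range m, p ^ i := by
  obtain ⟨k, rfl⟩ := hp
  have hgeom := geom_sum_mul_add (2 * k) m
  generalize ∑ i ∈ range m, (2 * k + 1) ^ i = S at hgeom ⊢
  rw [← hgeom, show (2 * k + 1) / 2 = k by omega, show S * (2 * k) = 2 * (k * S) by ring]
  omega

lemma Nat.odd_geom_sum {p m : ℕ} (hp : Odd p) (hm : Odd m) : Odd (∑ i ∈ range m, p ^ i) := by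
  rw [odd_sum_iff_odd_card_odd, filter_true_of_mem fun i _ => hp.pow, card_range]
  exact hm

section ZModExtension

variable {p m : ℕ} [Fact p.Prime] {F : Type*} [Field F] [Fintype F] [DecidableEq F]
  [Algebra (ZMod p) F]

local notation "Tr" => Algebra.trace (ZMod p) F

/- Euler's criterion on both sides: `(p ^ m - 1) / 2 = (p - 1) / 2 * (1 + p + ⋯ + p ^ (m - 1))`,
and the second factor is odd. -/
lemma quadraticChar_algebraMap_zmod (hp : p ≠ 2) (hcard : Fintype.card F = p ^ m) (hm : Odd m)
    (z : ZMod p) : quadraticChar F (algebraMap (ZMod p) F z) = quadraticChar (ZMod p) z := by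
  have : CharP F p := charP_of_injective_algebraMap (algebraMap (ZMod p) F).injective p
  have hF : ringChar F ≠ 2 := by rwa [ringChar.eq F p]
  have hpF : ringChar (ZMod p) ≠ 2 := by rwa [ZMod.ringChar_zmod_n]
  have hpodd : Odd p := (Fact.out : p.Prime).odd_of_ne_two hp
  have hS := Nat.odd_geom_sum hpodd hm
  refine Int.cast_injOn_of_ringChar_ne_two hF (quadraticChar_isQuadratic F _)
    (quadraticChar_isQuadratic (ZMod p) z) ?_
  calc ((quadraticChar F (algebraMap (ZMod p) F z) : ℤ) : F)
      = algebraMap (ZMod p) F ((z ^ (p / 2)) ^ ∑ i ∈ range m, p ^ i) := by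
        rw [quadraticChar_eq_pow_of_char_ne_two' hF, hcard,
          Nat.pow_div_two_eq_mul_geom_sum hpodd, pow_mul, map_pow, map_pow]
    _ = algebraMap (ZMod p) F (((quadraticChar (ZMod p) ^ ∑ i ∈ range m, p ^ i) z : ℤ)) := by
        have hz : (quadraticChar (ZMod p) z : ZMod p) = z ^ (p / 2) := by
          simpa only [ZMod.card] using quadraticChar_eq_pow_of_char_ne_two' hpF z
        rw [MulChar.pow_apply' _ hS.pos.ne', Int.cast_pow, hz]
    _ = ((quadraticChar (ZMod p) z : ℤ) : F) := by
        rw [(quadraticChar_isQuadratic (ZMod p)).pow_odd hS, map_intCast]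

variable {ψ : AddChar (ZMod p) ℂ}

lemma sum_addChar_trace_quadratic (hp : p ≠ 2) (hcard : Fintype.card F = p ^ m) (hm : Odd m)
    (hψ : ψ.IsPrimitive) {z : ZMod p} (hz : z ≠ 0) (δ : ZMod p) (a : F) :
    ∑ x : F, ψ (z * Tr (x ^ 2)) * ψ (δ * Tr (a * x)) =
      quadraticCharℂ (ZMod p) z * gaussSum (quadraticCharℂ F) (ψ.compTrace F) *
        ψ (-(δ ^ 2 * Tr (a ^ 2) / (4 * z))) := by
  have : CharP F p := charP_of_injective_algebraMap (algebraMap (ZMod p) F).injective p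
  have hF : ringChar F ≠ 2 := by rwa [ringChar.eq F p]
  have htrace : ∀ (t : ZMod p) (y : F), Tr (algebraMap (ZMod p) F t * y) = t * Tr y := by
    intro t y
    rw [← Algebra.smul_def, map_smul, smul_eq_mul]
  have hterm : ∀ x : F, ψ (z * Tr (x ^ 2)) * ψ (δ * Tr (a * x)) =
      ψ.compTrace F (algebraMap (ZMod p) F z * x ^ 2 + (algebraMap (ZMod p) F δ * a) * x) := by
    intro x
    rw [map_add_eq_mul, mul_assoc]
    simp only [compTrace, compAddMonoidHom_apply, LinearMap.toAddMonoidHom_coe, htrace]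
  have hz' : algebraMap (ZMod p) F z ≠ 0 := (map_ne_zero _).mpr hz
  rw [sum_congr rfl fun x _ => hterm x, sum_addChar_quadratic hF hψ.compTrace hz',
    quadraticCharℂ_apply, quadraticChar_algebraMap_zmod hp hcard hm, ← quadraticCharℂ_apply]
  congr 1
  have hconst : -((algebraMap (ZMod p) F δ * a) ^ 2 / (4 * algebraMap (ZMod p) F z)) =
      algebraMap (ZMod p) F (-(δ ^ 2 / (4 * z))) * a ^ 2 := by
    simp only [map_neg, map_div₀, map_mul, map_pow, map_ofNat]
    ring
  simp only [compTrace, compAddMonoidHom_apply, LinearMap.toAddMonoidHom_coe, hconst, htrace]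
  ring_nf

lemma sum_addChar_trace_sq_mul_addChar_trace_sub (hp : p ≠ 2) (hcard : Fintype.card F = p ^ m)
    (hm : Odd m) (hψ : ψ.IsPrimitive) (a : F) {ρ : ZMod p} (hρ : ρ ≠ 0) :
    ∑ x : F, ∑ z ∈ univ.filter (fun z : ZMod p => z ≠ 0),
        ∑ δ ∈ univ.filter (fun δ : ZMod p => δ ≠ 0), ψ (z * Tr (x ^ 2)) * ψ (δ * (Tr (a * x) - ρ)) =
      -(quadraticCharℂ (ZMod p) (-Tr (a ^ 2)) * gaussSum (quadraticCharℂ F) (ψ.compTrace F) *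
        gaussSum (quadraticCharℂ (ZMod p)) ψ) := by
  have hp' : ringChar (ZMod p) ≠ 2 := by rwa [ZMod.ringChar_zmod_n]
  set Gm := gaussSum (quadraticCharℂ F) (ψ.compTrace F)
  have hsplit : ∀ x z δ, ψ (z * Tr (x ^ 2)) * ψ (δ * (Tr (a * x) - ρ)) =
      ψ (z * Tr (x ^ 2)) * ψ (δ * Tr (a * x)) * ψ (δ * -ρ) := fun x z δ => by
    rw [mul_sub, sub_eq_add_neg, ← mul_neg, map_add_eq_mul, mul_assoc]
  calc _ = ∑ δ ∈ univ.filter (fun δ : ZMod p => δ ≠ 0), ψ (δ * -ρ) * Gm *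
        ∑ z ∈ univ.filter (fun z : ZMod p => z ≠ 0),
          quadraticCharℂ (ZMod p) z * ψ (-(δ ^ 2 * Tr (a ^ 2) / (4 * z))) := by
        simp only [hsplit]
        rw [sum_comm, sum_congr rfl fun z _ => sum_comm, sum_comm]
        refine sum_congr rfl fun δ _ => ?_
        rw [mul_sum]
        refine sum_congr rfl fun z hz => ?_
        rw [← sum_mul, sum_addChar_trace_quadratic hp hcard hm hψ (mem_filter.mp hz).2]
        ring
    _ = ∑ δ ∈ univ.filter (fun δ : ZMod p => δ ≠ 0), ψ (δ * -ρ) * Gm *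
          (quadraticCharℂ (ZMod p) (-Tr (a ^ 2)) * gaussSum (quadraticCharℂ (ZMod p)) ψ) :=
        sum_congr rfl fun δ hδ => by
          rw [sum_quadraticCharℂ_mul_addChar_sq_div hp' ψ (mem_filter.mp hδ).2]
    _ = _ := by
        rw [← sum_mul, ← sum_mul, sum_ne_zero_addChar_mul hψ (neg_ne_zero.mpr hρ)]
        ring

end ZModExtension

theorem stmt7_general (p m : ℕ) [Fact p.Prime] (hodd : p ≠ 2) (hmo : Odd m)
    (F : Type) [Field F] [Fintype F] [DecidableEq F] [Algebra (ZMod p) F]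
    (hcard : Fintype.card F = p ^ m)
    (ζ : ℂ) (hζ : IsPrimitiveRoot ζ p)
    (ηm : F → ℂ)
    (hηm : ∀ a : F, ηm a = if a = 0 then 0 else if IsSquare a then 1 else -1)
    (η : ZMod p → ℂ)
    (hη : ∀ a : ZMod p, η a = if a = 0 then 0 else if IsSquare a then 1 else -1)
    (Gm : ℂ)
    (hGm : Gm = ∑ x ∈ Finset.univ.filter (fun x : F => x ≠ 0),
        ηm x * ζ ^ (Algebra.trace (ZMod p) F x).val)
    (G : ℂ)
    (hG : G = ∑ x ∈ Finset.univ.filter (fun x : ZMod p => x ≠ 0), η x * ζ ^ x.val)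
    (a : F) (ρ : ZMod p) (hρ : ρ ≠ 0)
    (Ω₃ : ℂ)
    (hΩ : Ω₃ = ∑ x : F, ∑ z ∈ Finset.univ.filter (fun z : ZMod p => z ≠ 0),
        ∑ δ ∈ Finset.univ.filter (fun δ : ZMod p => δ ≠ 0),
          ζ ^ (z * Algebra.trace (ZMod p) F (x ^ 2)).val *
            ζ ^ (δ * (Algebra.trace (ZMod p) F (a * x) - ρ)).val) :
    (Algebra.trace (ZMod p) F (a ^ 2) = 0 → Ω₃ = 0) ∧
    (Algebra.trace (ZMod p) F (a ^ 2) ≠ 0 →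
      Ω₃ = -η (-(Algebra.trace (ZMod p) F (a ^ 2))) * Gm * G) := by
  let ψ := zmodChar p hζ.pow_eq_one
  obtain rfl : η = quadraticCharℂ (ZMod p) :=
    funext fun x => (hη x).trans (quadraticCharℂ_eq_ite x).symm
  obtain rfl : ηm = quadraticCharℂ F :=
    funext fun x => (hηm x).trans (quadraticCharℂ_eq_ite x).symm
  have hGm' : Gm = gaussSum (quadraticCharℂ F) (ψ.compTrace F) := by
    rw [hGm, filter_ne', sum_erase _ (by simp)]
    rfl
  have hG' : G = gaussSum (quadraticCharℂ (ZMod p)) ψ := by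
    rw [hG, filter_ne', sum_erase _ (by simp)]
    rfl
  have hΩ' : Ω₃ = -(quadraticCharℂ (ZMod p) (-Algebra.trace (ZMod p) F (a ^ 2)) * Gm * G) := by
    rw [hΩ, hGm', hG']
    exact sum_addChar_trace_sq_mul_addChar_trace_sub hodd hcard hmo
      (zmodChar_primitive_of_primitive_root p hζ) a hρ
  exact ⟨fun hA => by simp [hΩ', hA], fun _ => by rw [hΩ', neg_mul, neg_mul]⟩

/-- For `m` odd, `a ∈ F_r^*`, `A = Tr(a²)`:
`Ω₃ = 0` if `A = 0`, and `Ω₃ = -η(-A)·G_m·G` if `A ≠ 0`. -/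
theorem stmt7 (p m : ℕ) [Fact p.Prime] (hodd : p ≠ 2) (hm : 0 < m) (hmo : Odd m)
    (F : Type) [Field F] [Fintype F] [DecidableEq F] [Algebra (ZMod p) F]
    (hcard : Fintype.card F = p ^ m)
    (ζ : ℂ) (hζ : IsPrimitiveRoot ζ p)
    (ηm : F → ℂ)
    (hηm : ∀ a : F, ηm a = if a = 0 then 0 else if IsSquare a then 1 else -1)
    (η : ZMod p → ℂ)
    (hη : ∀ a : ZMod p, η a = if a = 0 then 0 else if IsSquare a then 1 else -1)
    (Gm : ℂ)
    (hGm : Gm = ∑ x ∈ Finset.univ.filter (fun x : F => x ≠ 0),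
        ηm x * ζ ^ (Algebra.trace (ZMod p) F x).val)
    (G : ℂ)
    (hG : G = ∑ x ∈ Finset.univ.filter (fun x : ZMod p => x ≠ 0), η x * ζ ^ x.val)
    (a : F) (ha : a ≠ 0) (ρ : ZMod p) (hρ : ρ ≠ 0)
    (Ω₃ : ℂ)
    (hΩ : Ω₃ = ∑ x : F, ∑ z ∈ Finset.univ.filter (fun z : ZMod p => z ≠ 0),
        ∑ δ ∈ Finset.univ.filter (fun δ : ZMod p => δ ≠ 0),
          ζ ^ (z * Algebra.trace (ZMod p) F (x ^ 2)).val *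
            ζ ^ (δ * (Algebra.trace (ZMod p) F (a * x) - ρ)).val) :
    (Algebra.trace (ZMod p) F (a ^ 2) = 0 → Ω₃ = 0) ∧
    (Algebra.trace (ZMod p) F (a ^ 2) ≠ 0 →
      Ω₃ = -η (-(Algebra.trace (ZMod p) F (a ^ 2))) * Gm * G) :=
  stmt7_general p m hodd hmo F hcard ζ hζ ηm hηm η hη Gm hGm G hG a ρ hρ Ω₃ hΩ
end

section
/- Let p be an odd prime, r = p^m, m even with m ≡ 0 (mod p). Then the number of x ∈ F_r with Tr(x²) = 0 and Tr(x) = 0 equals p^{m-2} + p^{-1}(p-1)G_m, where G_m is the quadratic Gauss sum over F_r; and for each B ∈ F_p^*, the number of x ∈ F_r with Tr(x²) = 0 and Tr(x) = B equals p^{m-2}. -/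
/-!
Detect `Tr (x²) = 0` and `Tr x = B` with a nontrivial additive character `ψ₀` of `𝔽_p`:
`p² N_B = ∑_{a,b ∈ 𝔽_p} ψ₀(-bB) ∑_x ψ(a x² + b x)` with `ψ = ψ₀ ∘ Tr`. For `a = 0` the inner sum
is `r` or `0` according as `b = 0` or not. For `a ≠ 0` complete the square: as `p ∣ m`, `ψ` is
trivial on `𝔽_p`, and as `m` is even, every element of `𝔽_p` is a square in `𝔽_r`; so the inner
sum is `∑_x ψ(x²) = G_m`. Summing `ψ₀(-bB)` over `b` leaves `p` or `0` according as `B = 0` or not.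
-/

open Finset Module

namespace AddChar

variable {F R : Type*} [Field F] [Fintype F] [CommRing R]

theorem sum_sq_eq_sum_quadraticChar [DecidableEq F] [IsDomain R] (hF : ringChar F ≠ 2)
    {ψ : AddChar F R} (hψ : ψ ≠ 1) : ∑ x, ψ (x ^ 2) = ∑ y, (quadraticChar F y : R) * ψ y := by
  have hsqrts (y : F) : (#{x | x ^ 2 = y} : R) = quadraticChar F y + 1 := by
    have h := quadraticChar_card_sqrts hF y
    rw [Set.toFinset_ofPred] at h
    exact_mod_cast congrArg (Int.cast (R := R)) h
  calc ∑ x, ψ (x ^ 2) = ∑ y, ∑ x with x ^ 2 = y, ψ y := by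
        rw [← Finset.sum_fiberwise univ (· ^ 2)]
        exact sum_congr rfl fun y _ => sum_congr rfl fun x hx => by rw [(mem_filter.mp hx).2]
    _ = ∑ y, (quadraticChar F y : R) * ψ y + ∑ y, ψ y := by
        simp only [sum_const, nsmul_eq_mul, hsqrts, add_mul, one_mul, sum_add_distrib]
    _ = ∑ y, (quadraticChar F y : R) * ψ y := by rw [sum_eq_zero_of_ne_one hψ, add_zero]

theorem sum_mul_sq_add_mul_eq (hF : ringChar F ≠ 2) (ψ : AddChar F R) {a : F} (ha : a ≠ 0) (b : F) :
    ∑ x, ψ (a * x ^ 2 + b * x) = ψ (-(b ^ 2 / (4 * a))) * ∑ x, ψ (a * x ^ 2) := by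
  have h2 : (2 : F) ≠ 0 := Ring.two_ne_zero hF
  have h4 : (4 : F) ≠ 0 := by rw [show (4 : F) = 2 * 2 by norm_num]; exact mul_ne_zero h2 h2
  rw [mul_sum]
  refine Fintype.sum_equiv (Equiv.addRight (b / (2 * a))) _ _ fun x => ?_
  rw [← map_add_eq_mul, Equiv.coe_addRight]
  congr 1
  field_simp
  ring

theorem sum_mul_sq_of_isSquare_s8 (ψ : AddChar F R) {a : F} (ha : IsSquare a) (ha0 : a ≠ 0) :
    ∑ x, ψ (a * x ^ 2) = ∑ x, ψ (x ^ 2) := by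
  obtain ⟨s, rfl⟩ := ha
  refine Fintype.sum_equiv (Equiv.mulLeft₀ s (left_ne_zero_of_mul ha0)) _ _ fun x => ?_
  change ψ _ = ψ ((s * x) ^ 2)
  ring_nf

end AddChar

theorem Algebra.trace_algebraMap_eq_zero_of_ringChar_dvd {K L : Type*} [Field K] [CommRing L]
    [Algebra K L] (h : ringChar K ∣ finrank K L) (c : K) :
    Algebra.trace K L (algebraMap K L c) = 0 := by
  rw [Algebra.trace_algebraMap, nsmul_eq_mul, (ringChar.spec K _).mpr h, zero_mul]

theorem isSquare_algebraMap_of_even_finrank {K L : Type*} [Field K] [Fintype K] [Field L]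
    [Fintype L] [Algebra K L] (h : Even (finrank K L)) (c : K) :
    IsSquare (algebraMap K L c) := by
  by_cases hL : ringChar L = 2
  · exact FiniteField.isSquare_of_char_two hL _
  rcases eq_or_ne c 0 with rfl | hc
  · exact ⟨0, by simp⟩
  obtain ⟨t, ht⟩ := h
  set s := Fintype.card K ^ t
  have hcard : Fintype.card L = s ^ 2 := by
    rw [card_eq_pow_finrank (K := K), ht, ← two_mul, pow_mul']
  obtain ⟨k, hk⟩ : Odd s := by
    have := FiniteField.odd_card_of_char_ne_two hL
    rw [hcard] at this
    exact (Nat.odd_pow_iff two_ne_zero).mp (Nat.odd_iff.mpr this)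
  -- Euler's criterion: `(s² - 1) / 2 = (s - 1) (s + 1) / 2`, and `c ^ s = c` as `s` is a power
  -- of `#K`.
  have hhalf : Fintype.card L / 2 = (s - 1) * (k + 1) := by
    rw [hcard, hk, Nat.add_sub_cancel, show (2 * k + 1) ^ 2 = 2 * (2 * k * (k + 1)) + 1 by ring]
    omega
  have hc1 : c ^ (s - 1) = 1 := by
    have := FiniteField.pow_card_pow t c
    rwa [← pow_sub_one_mul (by positivity), mul_eq_right₀ hc] at this
  rw [FiniteField.isSquare_iff hL ((map_ne_zero _).mpr hc), hhalf, pow_mul, ← map_pow, hc1,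
    map_one, one_pow]

theorem AddChar.card_sq_mul_card_filter_eq_sum {K R X : Type*} [CommRing K] [Fintype K]
    [DecidableEq K] [CommRing R] [IsDomain R] [Fintype X] {ψ₀ : AddChar K R} (hψ₀ : ψ₀.IsPrimitive)
    (f g : X → K) (B : K) :
    (Fintype.card K : R) ^ 2 * #{x | f x = 0 ∧ g x = B}
      = ∑ a, ∑ b, ψ₀ (-(b * B)) * ∑ x, ψ₀ (a * f x) * ψ₀ (b * g x) := by
  calc (Fintype.card K : R) ^ 2 * #{x | f x = 0 ∧ g x = B}
      = ∑ x, (∑ a, ψ₀ (a * f x)) * ∑ b, ψ₀ (b * (g x - B)) := by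
        simp only [sum_mulShift _ hψ₀, sub_eq_zero, Nat.cast_ite, Nat.cast_zero,
          ite_zero_mul_ite_zero, sum_ite, sum_const_zero, add_zero, sum_const, nsmul_eq_mul, sq]
        ring
    _ = ∑ x, ∑ a, ∑ b, ψ₀ (-(b * B)) * (ψ₀ (a * f x) * ψ₀ (b * g x)) := by
        refine sum_congr rfl fun x _ => ?_
        rw [sum_mul_sum]
        refine sum_congr rfl fun a _ => sum_congr rfl fun b _ => ?_
        rw [mul_sub, sub_eq_add_neg, map_add_eq_mul]
        ring
    _ = ∑ a, ∑ b, ψ₀ (-(b * B)) * ∑ x, ψ₀ (a * f x) * ψ₀ (b * g x) := by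
        simp_rw [mul_sum]
        rw [sum_comm]
        exact sum_congr rfl fun a _ => sum_comm

namespace AddChar

variable {K F R : Type*} [Field K] [Field F] [Algebra K F] [CommRing R]

variable (F) in
noncomputable def traceComp (ψ₀ : AddChar K R) : AddChar F R :=
  ψ₀.compAddMonoidHom (Algebra.trace K F).toAddMonoidHom

@[simp]
theorem traceComp_apply (ψ₀ : AddChar K R) (x : F) :
    ψ₀.traceComp F x = ψ₀ (Algebra.trace K F x) :=
  rfl

theorem traceComp_algebraMap_mul (ψ₀ : AddChar K R) (a : K) (x : F) :
    ψ₀.traceComp F (algebraMap K F a * x) = ψ₀ (a * Algebra.trace K F x) := by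
  rw [traceComp_apply, ← Algebra.smul_def, map_smul, smul_eq_mul]

theorem traceComp_ne_one [Fintype K] [Fintype F] {ψ₀ : AddChar K R} (hψ₀ : ψ₀ ≠ 1) :
    ψ₀.traceComp F ≠ 1 := by
  obtain ⟨c, hc⟩ := ne_one_iff.mp hψ₀
  obtain ⟨x, rfl⟩ := Algebra.trace_surjective K F c
  exact ne_one_iff.mpr ⟨x, hc⟩

theorem sum_traceComp_mul_sq_add_mul [Fintype K] [Fintype F] [DecidableEq K] [IsDomain R]
    (hK : ringChar K ≠ 2) (hdvd : ringChar K ∣ finrank K F) (heven : Even (finrank K F))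
    {ψ₀ : AddChar K R} (hψ₀ : ψ₀ ≠ 1) (a b : K) :
    ∑ x : F, ψ₀.traceComp F (algebraMap K F a * x ^ 2 + algebraMap K F b * x)
      = if a = 0 then (if b = 0 then (Fintype.card F : R) else 0)
        else ∑ x, ψ₀.traceComp F (x ^ 2) := by
  classical
  have hψ := traceComp_ne_one (F := F) hψ₀
  rcases eq_or_ne a 0 with rfl | ha
  · simpa [mul_comm] using sum_mulShift (algebraMap K F b) (IsPrimitive.of_ne_one hψ)
  have ha' : algebraMap K F a ≠ 0 := (map_ne_zero _).mpr ha
  have hconst : -((algebraMap K F b) ^ 2 / (4 * algebraMap K F a))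
      = algebraMap K F (-(b ^ 2 / (4 * a))) := by
    simp only [map_neg, map_div₀, map_pow, map_mul, map_ofNat]
  rw [if_neg ha, sum_mul_sq_add_mul_eq (Algebra.ringChar_eq K F ▸ hK) _ ha', hconst,
    traceComp_apply, Algebra.trace_algebraMap_eq_zero_of_ringChar_dvd hdvd, map_zero_eq_one,
    one_mul, sum_mul_sq_of_isSquare_s8 _ (isSquare_algebraMap_of_even_finrank heven a) ha']

theorem card_sq_mul_card_trace_sq_eq_zero_trace_eq [Fintype K] [Fintype F] [DecidableEq K]
    [IsDomain R] (hK : ringChar K ≠ 2) (hdvd : ringChar K ∣ finrank K F)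
    (heven : Even (finrank K F)) {ψ₀ : AddChar K R} (hψ₀ : ψ₀ ≠ 1) (B : K) :
    (Fintype.card K : R) ^ 2 * #{x : F | Algebra.trace K F (x ^ 2) = 0 ∧ Algebra.trace K F x = B}
      = Fintype.card F + (Fintype.card K - 1) * (if B = 0 then (Fintype.card K : R) else 0)
          * ∑ x, ψ₀.traceComp F (x ^ 2) := by
  have hB : ∑ b, ψ₀ (-(b * B)) = if B = 0 then (Fintype.card K : R) else 0 := by
    simpa only [mul_neg, neg_eq_zero, Nat.cast_ite, Nat.cast_zero] using
      sum_mulShift (-B) (IsPrimitive.of_ne_one hψ₀)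
  rw [card_sq_mul_card_filter_eq_sum (IsPrimitive.of_ne_one hψ₀)]
  simp_rw [← traceComp_algebraMap_mul, ← map_add_eq_mul,
    sum_traceComp_mul_sq_add_mul hK hdvd heven hψ₀]
  rw [Fintype.sum_eq_add_sum_compl 0]
  have hrest : ∀ a ∈ ({0}ᶜ : Finset K), ∑ b, ψ₀ (-(b * B)) *
      (if a = 0 then (if b = 0 then (Fintype.card F : R) else 0) else ∑ x, ψ₀.traceComp F (x ^ 2))
        = (if B = 0 then (Fintype.card K : R) else 0) * ∑ x, ψ₀.traceComp F (x ^ 2) := by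
    intro a ha
    simp only [if_neg (by simpa using ha : a ≠ 0), ← sum_mul, hB]
  rw [sum_congr rfl hrest, sum_const, card_compl, card_singleton, nsmul_eq_mul,
    Nat.cast_sub Fintype.card_pos, Nat.cast_one]
  simp [mul_assoc]

end AddChar

/-- For `m > 2` even with `p ∣ m`: `#{x : Tr(x²)=0, Tr(x)=0} = p^{m-2} + p⁻¹(p-1)G_m`
and `#{x : Tr(x²)=0, Tr(x)=B} = p^{m-2}` for every `B ≠ 0`. -/
theorem stmt8 (p m : ℕ) [Fact p.Prime] (hodd : p ≠ 2) (hm : 2 < m) (hme : Even m)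
    (hmp : p ∣ m)
    (F : Type) [Field F] [Fintype F] [DecidableEq F] [Algebra (ZMod p) F]
    (hcard : Fintype.card F = p ^ m)
    (ζ : ℂ) (hζ : IsPrimitiveRoot ζ p)
    (ηm : F → ℂ)
    (hηm : ∀ a : F, ηm a = if a = 0 then 0 else if IsSquare a then 1 else -1)
    (Gm : ℂ)
    (hGm : Gm = ∑ x ∈ Finset.univ.filter (fun x : F => x ≠ 0),
        ηm x * ζ ^ (Algebra.trace (ZMod p) F x).val) :
    (((Finset.univ.filter (fun x : F =>
        Algebra.trace (ZMod p) F (x ^ 2) = 0 ∧ Algebra.trace (ZMod p) F x = 0)).card : ℂ)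
      = (p : ℂ) ^ (m - 2) + (p : ℂ)⁻¹ * ((p : ℂ) - 1) * Gm) ∧
    (∀ B : ZMod p, B ≠ 0 →
      ((Finset.univ.filter (fun x : F =>
          Algebra.trace (ZMod p) F (x ^ 2) = 0 ∧ Algebra.trace (ZMod p) F x = B)).card : ℂ)
        = (p : ℂ) ^ (m - 2)) := by
  have hp : p.Prime := Fact.out
  have hp0 : (p : ℂ) ≠ 0 := Nat.cast_ne_zero.mpr hp.ne_zero
  have hK : ringChar (ZMod p) = p := ZMod.ringChar_zmod_n p
  have hF : ringChar F = p := (Algebra.ringChar_eq (ZMod p) F).symm.trans hK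
  have hfinrank : finrank (ZMod p) F = m := by
    refine Nat.pow_right_injective hp.two_le ?_
    simpa only [← hcard, ZMod.card] using (card_eq_pow_finrank (K := ZMod p) (V := F)).symm
  set ψ₀ := AddChar.zmodChar p hζ.pow_eq_one
  have hψ₀ : ψ₀ ≠ 1 := by
    simpa only [AddChar.mulShift_one] using
      AddChar.zmodChar_primitive_of_primitive_root p hζ (one_ne_zero (α := ZMod p))
  have hGauss : ∑ x : F, ψ₀.traceComp F (x ^ 2) = Gm := by
    rw [AddChar.sum_sq_eq_sum_quadraticChar (hF ▸ hodd) (AddChar.traceComp_ne_one hψ₀), hGm,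
      sum_filter]
    refine sum_congr rfl fun x _ => ?_
    by_cases hx : x = 0 <;>
      simp [hx, hηm, quadraticChar_apply, quadraticCharFun, ψ₀, AddChar.zmodChar_apply]
  have key := AddChar.card_sq_mul_card_trace_sq_eq_zero_trace_eq (F := F) (hK.symm ▸ hodd)
    (by rw [hK, hfinrank]; exact hmp) (hfinrank ▸ hme) hψ₀
  simp only [ZMod.card, hcard, Nat.cast_pow, hGauss] at key
  have hsplit : (p : ℂ) ^ m = (p : ℂ) ^ 2 * (p : ℂ) ^ (m - 2) := by
    rw [← pow_add, Nat.add_sub_cancel' hm.le]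
  refine ⟨mul_left_cancel₀ (pow_ne_zero 2 hp0) ?_,
    fun B hB => mul_left_cancel₀ (pow_ne_zero 2 hp0) ?_⟩
  · rw [key, if_pos rfl, hsplit]
    field_simp
  · rw [key, if_neg hB, hsplit]
    ring
end

section
/- Let p be an odd prime, r = p^m with m odd and m ≡ 0 (mod p). For A ∈ F_p^* and B ∈ F_p, let N(A,B) = #{x ∈ F_r : Tr(x²) = A, Tr(x) = B}. Then N(A,0) = p^{m-2} + η(-A)·p^{-1}·G_m·G and N(A,B) = p^{m-2} for B ≠ 0, where η is the quadratic character of F_p, G its Gauss sum over F_p, and G_m the quadratic Gauss sum over F_r. -/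
/-!
Detecting `Tr(x²) = A` by additive characters, `p · N(A,0)` is `∑_y ψ(-Ay) S(y)` with
`S(y) = ∑_{Tr x = 0} ψ(y Tr(x²))`. For `y ≠ 0`, detecting `Tr x = 0` by a second character sum
and completing the square shows that `S(y)` is the full quadratic sum `∑_x ψ(Tr(y x²))`: the
shift constant lies in `F_p`, where the trace is multiplication by `m ≡ 0`. That sum is
`η_m(y) G_m`, and `η_m(y) = η(y)` because a norm argument in the odd-degree extension shows that
`y` is a square in `F_r` iff it is one in `F_p`. Summing `η(y) ψ(-Ay)` then gives `η(-A) G`.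
For `B ≠ 0`, the translation `x ↦ x + D` with `D ∈ F_p` fixes `Tr x` and adds `2DB` to
`Tr(x²)`, so `N(A,B)` does not depend on `A`, while every fibre of the trace has `p^{m-1}`
elements.
-/

open Finset Module

theorem AddMonoidHom.card_mul_card_fiber_of_surjective {G M : Type*} [AddGroup G] [Fintype G]
    [AddMonoid M] [Fintype M] [DecidableEq M] (f : G →+ M) (hf : Function.Surjective f)
    (y : M) : Fintype.card M * #{g | f g = y} = Fintype.card G := by
  have hfib (z : M) : #{g | f g = z} = #{g | f g = y} :=
    AddMonoidHom.card_fiber_eq_of_mem_range f (hf z) (hf y)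
  rw [← card_univ (α := G),
    card_eq_sum_card_fiberwise (f := f) (s := univ) (t := univ) fun _ _ ↦ mem_univ _]
  simp only [hfib, sum_const, card_univ, smul_eq_mul]

theorem AddChar.sum_mul_sq_add_mul_s12 {L R : Type*} [Field L] [Fintype L] [CommRing R]
    (hL : ringChar L ≠ 2) (ψ : AddChar L R) {a : L} (ha : a ≠ 0) (b : L) :
    ∑ x, ψ (a * x ^ 2 + b * x) = ψ (-(b ^ 2 / (4 * a))) * ∑ x, ψ (a * x ^ 2) := by
  have h2 : (2 : L) ≠ 0 := Ring.two_ne_zero hL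
  have h4 : (4 : L) ≠ 0 := by simpa [show (4 : L) = 2 * 2 by norm_num] using h2
  rw [← (Equiv.subRight (b / (2 * a))).sum_comp, mul_sum]
  refine sum_congr rfl fun x _ ↦ ?_
  rw [← AddChar.map_add_eq_mul, Equiv.subRight_apply]
  congr 1
  field_simp
  ring

theorem AddChar.sum_mul_eq_ite {K : Type*} [Field K] [Fintype K] [DecidableEq K]
    {ψ : AddChar K ℂ} (hψ : ψ ≠ 1) (t : K) :
    ∑ z, ψ (z * t) = if t = 0 then (Fintype.card K : ℂ) else 0 := by
  rw [AddChar.sum_mulShift t (AddChar.IsPrimitive.of_ne_one hψ), Nat.cast_ite, Nat.cast_zero]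

noncomputable def complexQuadraticChar (K : Type*) [Field K] [Fintype K] [DecidableEq K] :
    MulChar K ℂ :=
  (quadraticChar K).ringHomComp (Int.castRingHom ℂ)

theorem complexQuadraticChar_apply {K : Type*} [Field K] [Fintype K] [DecidableEq K] (a : K) :
    complexQuadraticChar K a = if a = 0 then 0 else if IsSquare a then 1 else -1 := by
  simp only [complexQuadraticChar, MulChar.ringHomComp_apply, quadraticChar_apply,
    quadraticCharFun]
  split_ifs <;> simp

theorem complexQuadraticChar_inv (K : Type*) [Field K] [Fintype K] [DecidableEq K] :
    (complexQuadraticChar K)⁻¹ = complexQuadraticChar K :=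
  ((quadraticChar_isQuadratic K).comp _).inv

theorem gaussSum_eq_sum_ne_zero {K R : Type*} [Field K] [Fintype K] [DecidableEq K] [CommRing R]
    [Nontrivial R] (χ : MulChar K R) (ψ : AddChar K R) :
    gaussSum χ ψ = ∑ x ∈ univ.filter (fun x : K ↦ x ≠ 0), χ x * ψ x := by
  refine (sum_filter_of_ne (p := fun x ↦ x ≠ 0) fun x _ hx h0 ↦ hx ?_).symm
  rw [h0, MulChar.map_zero, zero_mul]

theorem AddChar.sum_mul_sq_eq_gaussSum {L : Type*} [Field L] [Fintype L] [DecidableEq L]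
    (hL : ringChar L ≠ 2) {ψ : AddChar L ℂ} (hψ : ψ ≠ 1) {a : L} (ha : a ≠ 0) :
    ∑ x, ψ (a * x ^ 2) = complexQuadraticChar L a * gaussSum (complexQuadraticChar L) ψ := by
  set χ := complexQuadraticChar L
  have hsqrts (u : L) : (#{x | x ^ 2 = u} : ℂ) = 1 + χ u := by
    have h := quadraticChar_card_sqrts hL u
    rw [Set.toFinset_ofPred] at h
    simp only [χ, complexQuadraticChar, MulChar.ringHomComp_apply, eq_intCast]
    exact_mod_cast h.trans (add_comm _ _)
  calc ∑ x, ψ (a * x ^ 2)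
      = ∑ u, ∑ x with x ^ 2 = u, ψ (a * x ^ 2) := (sum_fiberwise _ _ _).symm
    _ = ∑ u, (1 + χ u) * ψ (a * u) := by
        refine sum_congr rfl fun u _ ↦ ?_
        rw [sum_congr rfl fun x hx ↦ by rw [(mem_filter.mp hx).2], sum_const, nsmul_eq_mul,
          hsqrts]
    _ = ∑ u, ψ.mulShift a u + gaussSum χ (ψ.mulShift a) := by
        simp only [gaussSum, add_mul, one_mul, sum_add_distrib, AddChar.mulShift_apply]
    _ = χ a * gaussSum χ ψ := by
        have h := gaussSum_mulShift_eq χ ψ (Units.mk0 a ha)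
        rw [Units.val_mk0, complexQuadraticChar_inv] at h
        rw [AddChar.sum_eq_zero_of_ne_one (AddChar.IsPrimitive.of_ne_one hψ ha), zero_add, h]

theorem isSquare_algebraMap_iff_of_odd_finrank {K L : Type*} [Field K] [Field L] [Algebra K L]
    (hn : Odd (finrank K L)) (a : K) : IsSquare (algebraMap K L a) ↔ IsSquare a := by
  refine ⟨fun ⟨z, hz⟩ ↦ ?_, fun h ↦ h.map _⟩
  obtain ⟨k, hk⟩ := hn
  have hpow : IsSquare (a ^ finrank K L) :=
    ⟨Algebra.norm K z, by rw [← map_mul, ← hz, Algebra.norm_algebraMap]⟩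
  rcases eq_or_ne a 0 with rfl | ha
  · exact IsSquare.zero
  have : a = a ^ finrank K L / a ^ (2 * k) := by
    rw [hk, pow_succ, mul_div_cancel_left₀ _ (pow_ne_zero _ ha)]
  exact this ▸ hpow.div (Even.isSquare_pow (even_two_mul k) a)

theorem quadraticChar_algebraMap_of_odd_finrank {K L : Type*} [Field K] [Fintype K]
    [DecidableEq K] [Field L] [Fintype L] [DecidableEq L] [Algebra K L]
    (hn : Odd (finrank K L)) (a : K) :
    quadraticChar L (algebraMap K L a) = quadraticChar K a := by
  simp only [quadraticChar_apply, quadraticCharFun, map_eq_zero_iff _ (algebraMap K L).injective,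
    isSquare_algebraMap_iff_of_odd_finrank hn]

section Trace

variable {K L : Type*} [Field K] [Field L] [Algebra K L]

variable (L) in
noncomputable def traceAddChar {R : Type*} [CommMonoid R] (ψ : AddChar K R) : AddChar L R :=
  ψ.compAddMonoidHom (Algebra.trace K L).toAddMonoidHom

@[simp]
theorem traceAddChar_apply {R : Type*} [CommMonoid R] (ψ : AddChar K R) (x : L) :
    traceAddChar L ψ x = ψ (Algebra.trace K L x) :=
  rfl

theorem traceAddChar_ne_one [Finite L] {R : Type*} [CommMonoid R] {ψ : AddChar K R}
    (hψ : ψ ≠ 1) : traceAddChar L ψ ≠ 1 := by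
  obtain ⟨c, hc⟩ := AddChar.ne_one_iff.mp hψ
  obtain ⟨x, rfl⟩ := Algebra.trace_surjective K L c
  exact AddChar.ne_one_iff.mpr ⟨x, hc⟩

theorem trace_algebraMap_mul (c : K) (x : L) :
    Algebra.trace K L (algebraMap K L c * x) = c * Algebra.trace K L x := by
  rw [← Algebra.smul_def, map_smul, smul_eq_mul]

theorem trace_algebraMap_eq_zero (hrank : (finrank K L : K) = 0) (c : K) :
    Algebra.trace K L (algebraMap K L c) = 0 := by
  rw [Algebra.trace_algebraMap, nsmul_eq_mul, hrank, zero_mul]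

theorem trace_add_algebraMap_sq (hrank : (finrank K L : K) = 0) (x : L) (c : K) :
    Algebra.trace K L ((x + algebraMap K L c) ^ 2)
      = Algebra.trace K L (x ^ 2) + 2 * c * Algebra.trace K L x := by
  have : (x + algebraMap K L c) ^ 2
      = x ^ 2 + algebraMap K L (2 * c) * x + algebraMap K L (c ^ 2) := by
    simp only [map_mul, map_pow, map_ofNat]; ring
  rw [this, map_add, map_add, trace_algebraMap_eq_zero hrank, add_zero, trace_algebraMap_mul]

variable [DecidableEq K] [Fintype L]

theorem card_traceSq_trace_eq_of_ne_zero (hK : ringChar K ≠ 2) (hrank : (finrank K L : K) = 0)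
    {B : K} (hB : B ≠ 0) (A A' : K) :
    #{x : L | Algebra.trace K L (x ^ 2) = A ∧ Algebra.trace K L x = B}
      = #{x : L | Algebra.trace K L (x ^ 2) = A' ∧ Algebra.trace K L x = B} := by
  have h2B : 2 * B ≠ 0 := mul_ne_zero (Ring.two_ne_zero hK) hB
  set D := (A' - A) / (2 * B)
  refine card_equiv (Equiv.addRight (algebraMap K L D)) fun x ↦ ?_
  have hD : 2 * D * B = A' - A := by rw [mul_right_comm]; exact mul_div_cancel₀ _ h2B
  simp only [mem_filter, mem_univ, true_and, Equiv.coe_addRight, trace_add_algebraMap_sq hrank,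
    map_add, trace_algebraMap_eq_zero hrank, add_zero]
  constructor
  · rintro ⟨hA, hB⟩
    exact ⟨by rw [hA, hB]; linear_combination hD, hB⟩
  · rintro ⟨hA, hB⟩
    exact ⟨by rw [hB] at hA; linear_combination hA - hD, hB⟩

variable [Fintype K]

theorem card_mul_card_trace_eq (t : K) :
    Fintype.card K * #{x : L | Algebra.trace K L x = t} = Fintype.card L :=
  (Algebra.trace K L).toAddMonoidHom.card_mul_card_fiber_of_surjective
    (Algebra.trace_surjective K L) t

theorem card_mul_card_traceSq_trace_of_ne_zero (hK : ringChar K ≠ 2)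
    (hrank : (finrank K L : K) = 0) {B : K} (hB : B ≠ 0) (A : K) :
    Fintype.card K * #{x : L | Algebra.trace K L (x ^ 2) = A ∧ Algebra.trace K L x = B}
      = #{x : L | Algebra.trace K L x = B} := by
  symm
  calc #{x : L | Algebra.trace K L x = B}
      = ∑ A', #{x ∈ {x : L | Algebra.trace K L x = B} | Algebra.trace K L (x ^ 2) = A'} :=
        card_eq_sum_card_fiberwise fun _ _ ↦ mem_univ _
    _ = ∑ A', #{x : L | Algebra.trace K L (x ^ 2) = A' ∧ Algebra.trace K L x = B} := by
        simp only [filter_filter, and_comm]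
    _ = _ := by
        rw [sum_congr rfl fun A' _ ↦ card_traceSq_trace_eq_of_ne_zero hK hrank hB A' A, sum_const,
          card_univ, smul_eq_mul]

theorem sum_trace_eq_zero_addChar_mul_traceSq_eq_sum (hK : ringChar K ≠ 2)
    (hrank : (finrank K L : K) = 0) {ψ : AddChar K ℂ} (hψ : ψ ≠ 1) {y : K} (hy : y ≠ 0) :
    ∑ x ∈ {x : L | Algebra.trace K L x = 0}, ψ (y * Algebra.trace K L (x ^ 2))
      = ∑ x, traceAddChar L ψ (algebraMap K L y * x ^ 2) := by
  set ψL := traceAddChar L ψ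
  set Y := algebraMap K L y
  have hL : ringChar L ≠ 2 := Algebra.ringChar_eq K L ▸ hK
  have hY : Y ≠ 0 := (map_ne_zero _).mpr hy
  -- completing the square only shifts by a constant of `K`, whose trace vanishes
  have hsquare (z : K) :
      ∑ x, ψL (Y * x ^ 2 + algebraMap K L z * x) = ∑ x, ψL (Y * x ^ 2) := by
    rw [AddChar.sum_mul_sq_add_mul_s12 hL ψL hY, ← map_pow, ← map_ofNat (algebraMap K L) 4,
      ← map_mul, ← map_div₀, ← map_neg, traceAddChar_apply, trace_algebraMap_eq_zero hrank,
      AddChar.map_zero_eq_one, one_mul]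
  have hq : (Fintype.card K : ℂ) ≠ 0 := Nat.cast_ne_zero.mpr Fintype.card_ne_zero
  refine mul_left_cancel₀ hq ?_
  calc (Fintype.card K : ℂ) * ∑ x ∈ {x : L | Algebra.trace K L x = 0},
        ψ (y * Algebra.trace K L (x ^ 2))
      = ∑ x, (∑ z, ψ (z * Algebra.trace K L x)) * ψL (Y * x ^ 2) := by
        simp only [AddChar.sum_mul_eq_ite hψ, ite_mul, zero_mul, sum_ite, sum_const_zero,
          add_zero, mul_sum, ψL, Y, traceAddChar_apply, trace_algebraMap_mul]
    _ = ∑ z, ∑ x, ψL (Y * x ^ 2 + algebraMap K L z * x) := by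
        simp only [sum_mul, AddChar.map_add_eq_mul, ψL, traceAddChar_apply, trace_algebraMap_mul]
        rw [sum_comm]
        simp only [mul_comm]
    _ = (Fintype.card K : ℂ) * ∑ x, ψL (Y * x ^ 2) := by
        simp only [hsquare, sum_const, card_univ, nsmul_eq_mul]

theorem sum_trace_eq_zero_addChar_mul_traceSq (hK : ringChar K ≠ 2)
    (hn : Odd (finrank K L)) (hrank : (finrank K L : K) = 0) [DecidableEq L]
    {ψ : AddChar K ℂ} (hψ : ψ ≠ 1) (y : K) :
    ∑ x ∈ {x : L | Algebra.trace K L x = 0}, ψ (y * Algebra.trace K L (x ^ 2))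
      = (if y = 0 then (#{x : L | Algebra.trace K L x = 0} : ℂ) else 0)
        + complexQuadraticChar K y * gaussSum (complexQuadraticChar L) (traceAddChar L ψ) := by
  rcases eq_or_ne y 0 with rfl | hy
  · simp [MulChar.map_zero]
  rw [sum_trace_eq_zero_addChar_mul_traceSq_eq_sum hK hrank hψ hy,
    AddChar.sum_mul_sq_eq_gaussSum (Algebra.ringChar_eq K L ▸ hK) (traceAddChar_ne_one hψ)
      ((map_ne_zero _).mpr hy), if_neg hy, zero_add]
  simp only [complexQuadraticChar, MulChar.ringHomComp_apply,
    quadraticChar_algebraMap_of_odd_finrank hn]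

theorem card_mul_card_traceSq_trace_zero (hK : ringChar K ≠ 2)
    (hn : Odd (finrank K L)) (hrank : (finrank K L : K) = 0) [DecidableEq L]
    {ψ : AddChar K ℂ} (hψ : ψ ≠ 1) {A : K} (hA : A ≠ 0) :
    (Fintype.card K : ℂ) * #{x : L | Algebra.trace K L (x ^ 2) = A ∧ Algebra.trace K L x = 0}
      = #{x : L | Algebra.trace K L x = 0} + complexQuadraticChar K (-A)
        * gaussSum (complexQuadraticChar L) (traceAddChar L ψ)
        * gaussSum (complexQuadraticChar K) ψ := by
  set χ := complexQuadraticChar K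
  set gaussL := gaussSum (complexQuadraticChar L) (traceAddChar L ψ)
  have hgauss := gaussSum_mulShift_eq χ ψ (Units.mk0 (-A) (neg_ne_zero.mpr hA))
  rw [Units.val_mk0, complexQuadraticChar_inv] at hgauss
  calc (Fintype.card K : ℂ)
        * #{x : L | Algebra.trace K L (x ^ 2) = A ∧ Algebra.trace K L x = 0}
      = ∑ x ∈ {x : L | Algebra.trace K L x = 0},
          ∑ y, ψ (y * (Algebra.trace K L (x ^ 2) - A)) := by
        simp only [AddChar.sum_mul_eq_ite hψ, sub_eq_zero, sum_ite, sum_const_zero, add_zero,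
          sum_const, nsmul_eq_mul, filter_filter, and_comm, mul_comm]
    _ = ∑ y, (∑ x ∈ {x : L | Algebra.trace K L x = 0}, ψ (y * Algebra.trace K L (x ^ 2)))
          * ψ.mulShift (-A) y := by
        rw [sum_comm]
        simp only [sum_mul, AddChar.mulShift_apply, ← AddChar.map_add_eq_mul]
        congr! 3; ring
    _ = #{x : L | Algebra.trace K L x = 0} + gaussL * gaussSum χ (ψ.mulShift (-A)) := by
        simp only [sum_trace_eq_zero_addChar_mul_traceSq hK hn hrank hψ, add_mul, ite_mul,
          zero_mul, sum_add_distrib, sum_ite_eq', mem_univ, if_true, AddChar.map_zero_eq_one,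
          mul_one]
        rw [show gaussSum χ (ψ.mulShift (-A)) = ∑ y, χ y * ψ.mulShift (-A) y from rfl,
          mul_sum]
        exact congrArg _ (sum_congr rfl fun y _ ↦ by ring)
    _ = _ := by rw [hgauss]; ring

end Trace

/-- For `m` odd with `p ∣ m` and `A ∈ F_p^*`:
`N(A,0) = p^{m-2} + η(-A)p⁻¹G_mG` and `N(A,B) = p^{m-2}` for `B ≠ 0`. -/
theorem stmt12 (p m : ℕ) [Fact p.Prime] (hodd : p ≠ 2) (hm : 2 < m) (hmo : Odd m)
    (hmp : p ∣ m)
    (F : Type) [Field F] [Fintype F] [DecidableEq F] [Algebra (ZMod p) F]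
    (hcard : Fintype.card F = p ^ m)
    (ζ : ℂ) (hζ : IsPrimitiveRoot ζ p)
    (ηm : F → ℂ)
    (hηm : ∀ a : F, ηm a = if a = 0 then 0 else if IsSquare a then 1 else -1)
    (η : ZMod p → ℂ)
    (hη : ∀ a : ZMod p, η a = if a = 0 then 0 else if IsSquare a then 1 else -1)
    (Gm : ℂ)
    (hGm : Gm = ∑ x ∈ Finset.univ.filter (fun x : F => x ≠ 0),
        ηm x * ζ ^ (Algebra.trace (ZMod p) F x).val)
    (G : ℂ)
    (hG : G = ∑ x ∈ Finset.univ.filter (fun x : ZMod p => x ≠ 0), η x * ζ ^ x.val)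
    (A : ZMod p) (hA : A ≠ 0) :
    (((Finset.univ.filter (fun x : F =>
        Algebra.trace (ZMod p) F (x ^ 2) = A ∧ Algebra.trace (ZMod p) F x = 0)).card : ℂ)
      = (p : ℂ) ^ (m - 2) + η (-A) * (p : ℂ)⁻¹ * Gm * G) ∧
    (∀ B : ZMod p, B ≠ 0 →
      ((Finset.univ.filter (fun x : F =>
          Algebra.trace (ZMod p) F (x ^ 2) = A ∧ Algebra.trace (ZMod p) F x = B)).card : ℂ)
        = (p : ℂ) ^ (m - 2)) := by
  have hp := Fact.out (p := p.Prime)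
  have hpC : (p : ℂ) ≠ 0 := Nat.cast_ne_zero.mpr hp.ne_zero
  set ψ := AddChar.zmodChar p hζ.pow_eq_one
  have hψ : ψ ≠ 1 := by
    simpa using AddChar.zmodChar_primitive_of_primitive_root p hζ one_ne_zero
  have hK : ringChar (ZMod p) ≠ 2 := by rwa [ZMod.ringChar_zmod_n]
  have hfinrank : finrank (ZMod p) F = m := by
    have h := Module.card_eq_pow_finrank (K := ZMod p) (V := F)
    rw [ZMod.card, hcard] at h
    exact Nat.pow_right_injective hp.two_le h.symm
  have hrank : (finrank (ZMod p) F : ZMod p) = 0 := by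
    rwa [hfinrank, ZMod.natCast_eq_zero_iff]
  have hGm' : Gm = gaussSum (complexQuadraticChar F) (traceAddChar F ψ) := by
    simp only [hGm, hηm, gaussSum_eq_sum_ne_zero, complexQuadraticChar_apply]; rfl
  have hG' : G = gaussSum (complexQuadraticChar (ZMod p)) ψ := by
    simp only [hG, hη, gaussSum_eq_sum_ne_zero, complexQuadraticChar_apply]; rfl
  have hpow : (p : ℂ) ^ (m - 1) = p * p ^ (m - 2) := by
    rw [← pow_succ']; congr 1; omega
  have hfiber (t : ZMod p) : (#{x : F | Algebra.trace (ZMod p) F x = t} : ℂ) = p ^ (m - 1) := by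
    refine mul_left_cancel₀ hpC ?_
    rw [← pow_succ', Nat.sub_add_cancel (by omega : 1 ≤ m)]
    exact_mod_cast (ZMod.card p ▸ hcard ▸ card_mul_card_trace_eq t : _)
  refine ⟨?_, fun B hB ↦ ?_⟩
  · have h := card_mul_card_traceSq_trace_zero (L := F) hK (hfinrank ▸ hmo) hrank hψ hA
    rw [ZMod.card, hfiber, ← hGm', ← hG', complexQuadraticChar_apply, ← hη] at h
    refine mul_left_cancel₀ hpC ?_
    rw [h, hpow]
    field_simp
  · have h := card_mul_card_traceSq_trace_of_ne_zero (L := F) hK hrank hB A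
    rw [ZMod.card] at h
    refine mul_left_cancel₀ hpC ?_
    rw [← hpow, ← hfiber B]
    exact_mod_cast h
end

section
/- Let p = 3 and r = 3^m with m ≥ 3 odd, and let D = {x ∈ F_r : Tr(x) = 1, Tr(x²) = 0}. If 3 | m, then #D = 3^{m-2}. In particular, for the code C_D = {(Tr(ax))_{x∈D} : a ∈ F_r}, the length equals 3^{m-2}. -/
/-!
Translating by an element `t` of trace `1` shifts the trace by `1`, so the three fibres of
`Tr` have equal size `3^(m-1)`. Since `3 ∣ m`, `Tr 1 = m = 0`; hence on the fibre `Tr x = 1`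
the translation `x ↦ x - 1` preserves `Tr x` and shifts `Tr (x²)` by `-2 Tr x + Tr 1 = 1`,
so the three values of `Tr (x²)` are again taken equally often, giving `#D = 3^(m-2)`.
-/

open Finset Module

section Shift

variable {α : Type*} {n : ℕ} {s : Finset α} {f : α → α} {g : α → ZMod n}

theorem card_filter_le_card_filter_add_of_shift (hf : Set.InjOn f s)
    (hmaps : ∀ x ∈ s, f x ∈ s) (hg : ∀ x ∈ s, g (f x) = g x + 1) (a : ZMod n) (k : ℕ) :
    #(s.filter (g · = a)) ≤ #(s.filter (g · = a + k)) := by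
  induction k with
  | zero => simp
  | succ k ih =>
    refine ih.trans (card_le_card_of_injOn f (fun x hx => ?_) (hf.mono fun x hx => ?_))
    · simp only [coe_filter, Set.mem_ofPred_eq] at hx ⊢
      rw [hg x hx.1, hx.2, Nat.cast_succ, add_assoc]
      exact ⟨hmaps x hx.1, rfl⟩
    · exact (mem_filter.mp hx).1

variable [NeZero n]

theorem card_filter_eq_of_shift (hf : Set.InjOn f s)
    (hmaps : ∀ x ∈ s, f x ∈ s) (hg : ∀ x ∈ s, g (f x) = g x + 1) (a b : ZMod n) :
    #(s.filter (g · = a)) = #(s.filter (g · = b)) := by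
  have key := card_filter_le_card_filter_add_of_shift hf hmaps hg
  refine le_antisymm ?_ ?_
  · simpa using key a (b - a).val
  · simpa using key b (a - b).val

theorem mul_card_filter_eq_card_of_shift (hf : Set.InjOn f s)
    (hmaps : ∀ x ∈ s, f x ∈ s) (hg : ∀ x ∈ s, g (f x) = g x + 1) (a : ZMod n) :
    n * #(s.filter (g · = a)) = #s := by
  calc n * #(s.filter (g · = a)) = ∑ b : ZMod n, #(s.filter (g · = b)) := by
        rw [sum_congr rfl fun b _ => card_filter_eq_of_shift hf hmaps hg b a, sum_const,
          card_univ, ZMod.card, smul_eq_mul]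
    _ = #s := (card_eq_sum_card_fiberwise fun x _ => mem_univ _).symm

end Shift

theorem Algebra.trace_one_eq_zero_of_dvd_finrank {K L : Type*} [Field K] [CommRing L] [Algebra K L]
    (p : ℕ) [CharP K p] (h : p ∣ finrank K L) : Algebra.trace K L 1 = 0 := by
  rw [← map_one (algebraMap K L), Algebra.trace_algebraMap, nsmul_one,
    CharP.cast_eq_zero_iff K p]
  exact h

theorem prime_mul_card_filter_trace_eq {p : ℕ} [Fact p.Prime] {F : Type*} [Field F] [Fintype F]
    [Algebra (ZMod p) F] (a : ZMod p) :
    p * #(univ.filter fun x : F => Algebra.trace (ZMod p) F x = a) = Fintype.card F := by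
  obtain ⟨t, ht⟩ := Algebra.trace_surjective (ZMod p) F 1
  exact mul_card_filter_eq_card_of_shift (f := (· + t)) (add_left_injective t).injOn
    (fun x _ => mem_univ _) (fun x _ => by simp [ht]) a

theorem three_mul_card_filter_trace_sq_eq {F : Type*} [Field F] [Fintype F] [Algebra (ZMod 3) F]
    (htr1 : Algebra.trace (ZMod 3) F 1 = 0) (b : ZMod 3) :
    3 * #(univ.filter fun x : F =>
        Algebra.trace (ZMod 3) F x = 1 ∧ Algebra.trace (ZMod 3) F (x ^ 2) = b) =
      #(univ.filter fun x : F => Algebra.trace (ZMod 3) F x = 1) := by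
  rw [← filter_filter]
  refine mul_card_filter_eq_card_of_shift (f := (· - 1)) (sub_left_injective (b := 1)).injOn
    (fun x hx => ?_) (fun x hx => ?_) b <;> simp only [mem_filter, mem_univ, true_and] at hx ⊢
  · rw [map_sub, hx, htr1, sub_zero]
  · have hsq : (x - 1) ^ 2 = x ^ 2 - 2 • x + 1 := by rw [two_nsmul]; ring
    rw [hsq, map_add, map_sub, map_nsmul, hx, htr1]
    generalize Algebra.trace (ZMod 3) F (x ^ 2) = c
    revert c
    decide

theorem stmt18_general (m : ℕ) (hm : 3 ≤ m) (hdvd : 3 ∣ m)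
    (F : Type) [Field F] [Fintype F] [Algebra (ZMod 3) F]
    (hcard : Fintype.card F = 3 ^ m) :
    (Finset.univ.filter (fun x : F =>
        Algebra.trace (ZMod 3) F x = 1 ∧ Algebra.trace (ZMod 3) F (x ^ 2) = 0)).card
      = 3 ^ (m - 2) := by
  have hfinrank : finrank (ZMod 3) F = m := by
    have := Module.card_eq_pow_finrank (K := ZMod 3) (V := F)
    rw [ZMod.card, hcard] at this
    exact (Nat.pow_right_injective (by norm_num) this).symm
  have htr1 := Algebra.trace_one_eq_zero_of_dvd_finrank (L := F) 3 (hfinrank ▸ hdvd)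
  have hA := prime_mul_card_filter_trace_eq (p := 3) (F := F) 1
  have hD := three_mul_card_filter_trace_sq_eq htr1 0
  rw [hcard, show m = m - 2 + 1 + 1 by omega, pow_succ, pow_succ] at hA
  omega

/-- For `p = 3`, `r = 3^m` with `m ≥ 3` odd and `3 ∣ m`, the defining set
`D = {x ∈ F_r : Tr(x) = 1, Tr(x²) = 0}` has `#D = 3^{m-2}`; in particular the
code `C_D` has length `3^{m-2}`. -/
theorem stmt18 (m : ℕ) (hm : 3 ≤ m) (hmo : Odd m) (hdvd : 3 ∣ m)
    (F : Type) [Field F] [Fintype F] [DecidableEq F] [Algebra (ZMod 3) F]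
    (hcard : Fintype.card F = 3 ^ m) :
    (Finset.univ.filter (fun x : F =>
        Algebra.trace (ZMod 3) F x = 1 ∧ Algebra.trace (ZMod 3) F (x ^ 2) = 0)).card
      = 3 ^ (m - 2) :=
  stmt18_general m hm hdvd F hcard
end

section
/- Let p be a prime power q, and let C be an [n, k, d] linear code over F_q with k ≥ 1. Then n ≥ Σ_{i=0}^{k-1} ⌈d/q^i⌉ (the Griesmer bound). -/
/-!
Induction on the dimension. Let `c` be a codeword of minimum weight `e`. Projecting `C` onto the
coordinates where `c` vanishes gives the residual code, of length `n - e` and dimension `k - 1`: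
a codeword supported inside the support of `c` is a multiple of `c`, since otherwise subtracting a
suitable multiple of `c` would leave a nonzero codeword of weight `< e`. A nonzero residual word
`y`, the projection of `x ∈ C`, has weight at least `⌈e / q⌉`: the `q` codewords `x - t • c` are
nonzero, so of weight `≥ e`, while their weights add up to `q (wt y + e) - e`. Finally
`⌈⌈e / q⌉ / q^i⌉ = ⌈e / q^(i+1)⌉`.
-/

open Finset Module

namespace Nat

lemma ceilDiv_ceilDiv {b c : ℕ} (hb : 0 < b) (hc : 0 < c) (a : ℕ) :
    a ⌈/⌉ b ⌈/⌉ c = a ⌈/⌉ (b * c) :=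
  eq_of_forall_ge_iff fun x ↦ by
    rw [ceilDiv_le_iff_le_mul hc, ceilDiv_le_iff_le_mul hb,
      ceilDiv_le_iff_le_mul (Nat.mul_pos hb hc), mul_assoc]

lemma ceilDiv_mono_left {b : ℕ} (hb : 0 < b) : Monotone fun a : ℕ ↦ a ⌈/⌉ b :=
  (gc_mul_ceilDiv hb).monotone_l

lemma cast_ceilDiv {K : Type*} [Field K] [LinearOrder K] [IsStrictOrderedRing K] [FloorRing K]
    {b : ℕ} (hb : 0 < b) (a : ℕ) : ((a ⌈/⌉ b : ℕ) : ℤ) = ⌈(a : K) / b⌉ := by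
  rw [← Int.natCast_ceil_eq_ceil (by positivity)]
  congr 1
  refine eq_of_forall_ge_iff fun x ↦ ?_
  rw [ceilDiv_le_iff_le_mul hb, Nat.ceil_le, div_le_iff₀ (by positivity), mul_comm]
  norm_cast

end Nat

variable {ι F : Type*} [Fintype ι] [Field F] [DecidableEq F]

lemma card_sub_mul_ne_zero_add_one [Fintype F] {a b : F} (hb : b ≠ 0) :
    #{t : F | a - t * b ≠ 0} + 1 = Fintype.card F := by
  have : ({t : F | a - t * b ≠ 0} : Finset F) = univ.erase (a / b) := by
    ext t
    simp [sub_eq_zero, eq_div_iff hb, eq_comm]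
  rw [this, card_erase_of_mem (mem_univ _), card_univ]
  have := Fintype.card_pos (α := F)
  omega

lemma hammingNorm_restrict (p : ι → Prop) [DecidablePred p] (x : ι → F) :
    hammingNorm (fun j : {j // p j} ↦ x j) = #{j | p j ∧ x j ≠ 0} := by
  rw [hammingNorm, ← card_map (Function.Embedding.subtype _)]
  congr 1
  ext j
  simp [and_comm]

lemma card_zeros_add_hammingNorm (c : ι → F) :
    Fintype.card {j // c j = 0} + hammingNorm c = Fintype.card ι := by
  rw [Fintype.card_subtype, hammingNorm, card_filter_add_card_filter_not, card_univ]

/-- Counting, coordinate by coordinate, the scalars `t` with `x j ≠ t * c j`: there are `q` of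
them where `c j = 0 ≠ x j`, none where `c j = x j = 0`, and `q - 1` where `c j ≠ 0`. -/
lemma sum_hammingNorm_sub_smul_add [Fintype F] (x c : ι → F) :
    ∑ t : F, hammingNorm (x - t • c) + hammingNorm c =
      Fintype.card F * (#{j | c j = 0 ∧ x j ≠ 0} + hammingNorm c) := by
  have hswap : ∑ t : F, hammingNorm (x - t • c) = ∑ j, #{t : F | x j - t * c j ≠ 0} := by
    simp only [hammingNorm, card_filter, Pi.sub_apply, Pi.smul_apply, smul_eq_mul]
    exact sum_comm
  rw [hswap, hammingNorm, card_filter, card_filter, ← sum_add_distrib, ← sum_add_distrib, mul_sum]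
  refine sum_congr rfl fun j _ ↦ ?_
  by_cases hc : c j = 0
  · by_cases hx : x j = 0 <;> simp [hc, hx]
  · simpa [hc] using card_sub_mul_ne_zero_add_one (a := x j) hc

section ResidualCode

variable {C : Submodule F (ι → F)} {c : ι → F}

def residualCode (C : Submodule F (ι → F)) (c : ι → F) : Submodule F ({j // c j = 0} → F) :=
  C.map (LinearMap.funLeft F F Subtype.val)

lemma exists_eq_smul_of_forall_eq_zero (hc0 : c ≠ 0) (hcC : c ∈ C)
    (hmin : ∀ x ∈ C, x ≠ 0 → hammingNorm c ≤ hammingNorm x) {x : ι → F} (hxC : x ∈ C)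
    (hx : ∀ j, c j = 0 → x j = 0) : ∃ t : F, x = t • c := by
  obtain ⟨j₀, hj₀⟩ : ∃ j, c j ≠ 0 := Function.ne_iff.1 hc0
  refine ⟨x j₀ / c j₀, by_contra fun hne ↦ ?_⟩
  set y := x - (x j₀ / c j₀) • c
  have hlt : hammingNorm y < hammingNorm c := by
    refine card_lt_card <|
      (ssubset_iff_of_subset fun j ↦ ?_).2 ⟨j₀, by simp [hj₀], by simp [y, hj₀]⟩
    simp only [mem_filter, mem_univ, true_and, y, Pi.sub_apply, Pi.smul_apply, smul_eq_mul]
    exact fun hy hc ↦ hy (by simp [hx j hc, hc])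
  exact (hmin y (C.sub_mem hxC (C.smul_mem _ hcC)) (sub_ne_zero.2 hne)).not_gt hlt

lemma finrank_residualCode_add_one (hc0 : c ≠ 0) (hcC : c ∈ C)
    (hmin : ∀ x ∈ C, x ≠ 0 → hammingNorm c ≤ hammingNorm x) :
    finrank F (residualCode C c) + 1 = finrank F C := by
  set f := (LinearMap.funLeft F F (Subtype.val : {j // c j = 0} → ι)).domRestrict C
  have hker : LinearMap.ker f = F ∙ ⟨c, hcC⟩ := by
    refine le_antisymm (fun x hx ↦ ?_) ?_
    · obtain ⟨t, ht⟩ := exists_eq_smul_of_forall_eq_zero hc0 hcC hmin x.2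
        fun j hj ↦ congrFun (LinearMap.mem_ker.1 hx) ⟨j, hj⟩
      exact Submodule.mem_span_singleton.2 ⟨t, Subtype.ext ht.symm⟩
    · rw [Submodule.span_singleton_le_iff_mem, LinearMap.mem_ker]
      ext j
      exact j.2
  have := f.finrank_range_add_finrank_ker
  rwa [hker, finrank_span_singleton (by simpa using hc0), LinearMap.range_domRestrict] at this

lemma ceilDiv_le_hammingNorm_of_mem_residualCode [Fintype F] (hcC : c ∈ C)
    (hmin : ∀ x ∈ C, x ≠ 0 → hammingNorm c ≤ hammingNorm x) {y : {j // c j = 0} → F}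
    (hy : y ∈ residualCode C c) (hy0 : y ≠ 0) :
    hammingNorm c ⌈/⌉ Fintype.card F ≤ hammingNorm y := by
  obtain ⟨x, hxC, rfl⟩ := hy
  have hle : ∀ t : F, hammingNorm c ≤ hammingNorm (x - t • c) := by
    refine fun t ↦ hmin _ (C.sub_mem hxC (C.smul_mem t hcC)) fun h ↦ hy0 ?_
    ext j
    simpa [sub_eq_zero, j.2] using congrFun h j
  have hsum := sum_hammingNorm_sub_smul_add x c
  have : Fintype.card F * hammingNorm c ≤ ∑ t : F, hammingNorm (x - t • c) := by
    simpa using sum_le_sum fun t (_ : t ∈ univ) ↦ hle t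
  change _ ≤ hammingNorm fun j : {j // c j = 0} ↦ x j
  rw [ceilDiv_le_iff_le_mul Fintype.card_pos, hammingNorm_restrict]
  rw [mul_add] at hsum
  omega

end ResidualCode

lemma exists_minWeight_codeword [Finite F] {C : Submodule F (ι → F)} (hC : C ≠ ⊥) :
    ∃ c ∈ C, c ≠ 0 ∧ ∀ x ∈ C, x ≠ 0 → hammingNorm c ≤ hammingNorm x := by
  obtain ⟨x, hxC, hx0⟩ := Submodule.exists_mem_ne_zero_of_ne_bot hC
  obtain ⟨c, ⟨hcC, hc0⟩, hmin⟩ :=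
    Set.exists_min_image {x | x ∈ C ∧ x ≠ 0} hammingNorm (Set.toFinite _) ⟨x, hxC, hx0⟩
  exact ⟨c, hcC, hc0, fun x hxC hx0 ↦ hmin x ⟨hxC, hx0⟩⟩

theorem griesmer_bound [Fintype F] (C : Submodule F (ι → F)) {d : ℕ}
    (hd : ∀ c ∈ C, c ≠ 0 → d ≤ hammingNorm c) :
    ∑ i ∈ range (finrank F C), d ⌈/⌉ Fintype.card F ^ i ≤ Fintype.card ι := by
  obtain ⟨k, hk⟩ : ∃ k, finrank F C = k := ⟨_, rfl⟩
  induction k generalizing ι C d with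
  | zero => simp [hk]
  | succ k ih =>
    have hq : 0 < Fintype.card F := Fintype.card_pos
    have hC : C ≠ ⊥ := fun h ↦ by rw [h, finrank_bot] at hk; omega
    obtain ⟨c, hcC, hc0, hmin⟩ := exists_minWeight_codeword hC
    have hrank : finrank F (residualCode C c) = k := by
      have := finrank_residualCode_add_one hc0 hcC hmin
      omega
    have hres := ih (residualCode C c)
      (fun _ ↦ ceilDiv_le_hammingNorm_of_mem_residualCode hcC hmin) hrank
    rw [hrank] at hres
    rw [hk]
    calc ∑ i ∈ range (k + 1), d ⌈/⌉ Fintype.card F ^ i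
        ≤ ∑ i ∈ range (k + 1), hammingNorm c ⌈/⌉ Fintype.card F ^ i :=
          sum_le_sum fun i _ ↦ Nat.ceilDiv_mono_left (pow_pos hq i) (hd c hcC hc0)
      _ = ∑ i ∈ range k, hammingNorm c ⌈/⌉ Fintype.card F ⌈/⌉ Fintype.card F ^ i
            + hammingNorm c := by
          simp [sum_range_succ', Nat.ceilDiv_ceilDiv hq (pow_pos hq _), pow_succ']
      _ ≤ Fintype.card {j // c j = 0} + hammingNorm c := by gcongr
      _ = Fintype.card ι := card_zeros_add_hammingNorm c

theorem stmt19_general (q n k d : ℕ) (F : Type) [Field F] [Fintype F] [DecidableEq F]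
    (hF : Fintype.card F = q)
    (C : Submodule F (Fin n → F)) (hk : Module.finrank F C = k)
    (hd1 : ∀ c ∈ C, c ≠ 0 → d ≤ hammingNorm c) :
    (n : ℤ) ≥ ∑ i ∈ Finset.range k, ⌈(d : ℚ) / (q : ℚ) ^ i⌉ := by
  subst hF hk
  have hq : 0 < Fintype.card F := Fintype.card_pos
  have hbound := griesmer_bound C hd1
  rw [Fintype.card_fin] at hbound
  calc ∑ i ∈ range (finrank F C), ⌈(d : ℚ) / (Fintype.card F : ℚ) ^ i⌉
      = ((∑ i ∈ range (finrank F C), d ⌈/⌉ Fintype.card F ^ i : ℕ) : ℤ) := by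
        push_cast [Nat.cast_ceilDiv (K := ℚ) (pow_pos hq _)]
        rfl
    _ ≤ n := by exact_mod_cast hbound

/-- Griesmer bound: if `C ⊆ F_q^n` is a `k`-dimensional linear code (`k ≥ 1`) with
minimum Hamming weight `d` among nonzero codewords, then
`n ≥ ∑_{i=0}^{k-1} ⌈d/q^i⌉`. -/
theorem stmt19 (q n k d : ℕ) (F : Type) [Field F] [Fintype F] [DecidableEq F]
    (hF : Fintype.card F = q)
    (C : Submodule F (Fin n → F)) (hk : Module.finrank F C = k) (hk1 : 1 ≤ k)
    (hd1 : ∀ c ∈ C, c ≠ 0 → d ≤ hammingNorm c)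
    (hd2 : ∃ c ∈ C, c ≠ 0 ∧ hammingNorm c = d) :
    (n : ℤ) ≥ ∑ i ∈ Finset.range k, ⌈(d : ℚ) / (q : ℚ) ^ i⌉ :=
  stmt19_general q n k d F hF C hk hd1
end
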